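/- arXiv:1609.05128 — 6 statements merged into one kernel-verified Lean document; each statement's English description precedes it below -/
import Mathlib

section
/- Suppose β_i = β ≥ 0 for all i, A(t) is symmetric with nonnegative entries and zero diagonal, piecewise continuous in t and bounded, and λ̄ := sup_{t≥0} λ₁(βA(t) − D) < 0. Then every differentiable solution p : [0,∞) → ℝⁿ of the time-varying n-intertwined SIS model with componentwise nonnegative initial condition satisfies ‖p(t)‖ ≤ e^{λ̄ t} ‖p(0)‖ for all t ≥ 0; in particular the disease-free equilibrium p = 0 is globally exponentially stable. -/
open Matrix
open Set

/-- Euclidean norm of a vector in `ℝⁿ`. -/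
noncomputable def eucNorm {n : ℕ} (x : Fin n → ℝ) : ℝ := Real.sqrt (∑ i, x i ^ 2)

lemma sis_hasDerivAt_minSq (x : ℝ) :
    HasDerivAt (fun y : ℝ => min y 0 ^ 2) (2 * min x 0) x := by
  rcases lt_trichotomy x 0 with h | h | h
  · have hev : (fun y : ℝ => min y 0 ^ 2) =ᶠ[nhds x] fun y => y ^ 2 := by
      filter_upwards [Iio_mem_nhds h] with y hy
      simp [min_eq_left (Set.mem_Iio.mp hy).le]
    have := (hasDerivAt_pow 2 x).congr_of_eventuallyEq hev
    simpa [min_eq_left h.le, two_mul, mul_comm] using this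
  · subst h
    have h2 : (2:ℝ) * min 0 0 = 0 := by simp
    rw [hasDerivAt_iff_tendsto_slope, h2]
    have hb : ∀ y : ℝ, y ≠ 0 → |slope (fun y : ℝ => min y 0 ^ 2) 0 y| ≤ |y| := by
      intro y hy
      rw [slope_def_field]
      rcases le_or_gt 0 y with h' | h'
      · simp [min_eq_right h']
      · rw [min_eq_left h'.le]
        have : y ^ 2 / y = y := by field_simp [hy]
        simp [this]
    have habs : Filter.Tendsto (fun y : ℝ => |y|) (nhdsWithin 0 {(0:ℝ)}ᶜ) (nhds 0) := by
      have h3 := (continuous_abs.tendsto (0:ℝ)).mono_left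
        (nhdsWithin_le_nhds (s := {(0:ℝ)}ᶜ))
      simpa using h3
    refine squeeze_zero_norm' ?_ habs
    filter_upwards [self_mem_nhdsWithin] with y hy
    exact hb y hy
  · have hev : (fun y : ℝ => min y 0 ^ 2) =ᶠ[nhds x] fun _ => (0:ℝ) := by
      filter_upwards [Ioi_mem_nhds h] with y hy
      simp [min_eq_right (le_of_lt (Set.mem_Ioi.mp hy))]
    have := (hasDerivAt_const x (0:ℝ)).congr_of_eventuallyEq hev
    simpa [min_eq_right h.le] using this

lemma sis_gronwall {f f' : ℝ → ℝ} {K d T : ℝ}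
    (hd : ∀ t ∈ Icc (0:ℝ) T, HasDerivAt f (f' t) t)
    (h0 : f 0 ≤ d) (hb : ∀ t ∈ Ico (0:ℝ) T, f' t ≤ K * f t) :
    ∀ t ∈ Icc (0:ℝ) T, f t ≤ d * Real.exp (K * t) := by
  intro t ht
  have := le_gronwallBound_of_liminf_deriv_right_le (f := f) (f' := f') (a := 0) (b := T)
    (δ := d) (K := K) (ε := 0)
    (fun s hs => (hd s hs).continuousAt.continuousWithinAt)
    (fun x hx r hr => by
      have h1 := ((hd x (Ico_subset_Icc_self hx)).hasDerivWithinAt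
        (s := Ici x)).liminf_right_slope_le hr
      refine h1.mono fun z hz => ?_
      rwa [slope_def_field, div_eq_inv_mul] at hz)
    h0 (fun x hx => by simpa using hb x hx)
  have := this t ht
  rwa [gronwallBound_ε0, sub_zero] at this

lemma sis_quad_le {n : ℕ} [Nonempty (Fin n)] (M : Matrix (Fin n) (Fin n) ℝ)
    (h : M.IsHermitian) (x : Fin n → ℝ) :
    x ⬝ᵥ (M *ᵥ x) ≤ (⨆ i, h.eigenvalues i) * (x ⬝ᵥ x) := by
  set U : Matrix (Fin n) (Fin n) ℝ := (h.eigenvectorUnitary : Matrix (Fin n) (Fin n) ℝ) with hU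
  have hUU : U * star U = 1 := (Matrix.mem_unitaryGroup_iff).mp h.eigenvectorUnitary.2
  set y : Fin n → ℝ := star U *ᵥ x with hy
  have hxU : x ᵥ* U = y := by
    rw [hy, Matrix.star_eq_conjTranspose, Matrix.conjTranspose_eq_transpose_of_trivial,
      Matrix.mulVec_transpose]
  have hdiag : M = U * Matrix.diagonal h.eigenvalues * star U := by
    have := h.spectral_theorem
    rwa [RCLike.ofReal_real_eq_id, Function.id_comp] at this
  have h1 : x ⬝ᵥ (M *ᵥ x) = ∑ i, h.eigenvalues i * y i ^ 2 := by
    conv_lhs => rw [hdiag, ← Matrix.mulVec_mulVec, ← Matrix.mulVec_mulVec,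
      Matrix.dotProduct_mulVec, hxU]
    simp only [dotProduct, Matrix.mulVec_diagonal]
    exact Finset.sum_congr rfl fun i _ => by ring
  have h2 : y ⬝ᵥ y = x ⬝ᵥ x := by
    have e1 : y ⬝ᵥ y = (x ᵥ* U) ⬝ᵥ y := by rw [hxU]
    rw [e1, ← Matrix.dotProduct_mulVec, hy, Matrix.mulVec_mulVec, hUU, Matrix.one_mulVec]
  have hbdd : ∀ i, h.eigenvalues i ≤ ⨆ j, h.eigenvalues j := fun i =>
    le_ciSup (Set.Finite.bddAbove (Set.finite_range _)) i
  calc x ⬝ᵥ (M *ᵥ x) = ∑ i, h.eigenvalues i * y i ^ 2 := h1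
    _ ≤ ∑ i, (⨆ j, h.eigenvalues j) * y i ^ 2 :=
        Finset.sum_le_sum fun i _ => mul_le_mul_of_nonneg_right (hbdd i) (sq_nonneg _)
    _ = (⨆ j, h.eigenvalues j) * (y ⬝ᵥ y) := by
        rw [dotProduct, Finset.mul_sum]
        exact Finset.sum_congr rfl fun i _ => by ring
    _ = (⨆ j, h.eigenvalues j) * (x ⬝ᵥ x) := by rw [h2]

/-- **Global exponential stability of the DFE (homogeneous, undirected case).**
Suppose `β_i = β ≥ 0` for all `i`, `A(t)` is symmetric with nonnegative entries and zero
diagonal and bounded, and `λ̄ := sup_{t≥0} λ₁(βA(t) − D) < 0` (encoded: `lam < 0` is an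
upper bound of the largest eigenvalue of `βA(t) − D` for every `t ≥ 0`).  Then every
differentiable solution of the time-varying n-intertwined SIS model with componentwise
nonnegative initial condition satisfies `‖p(t)‖ ≤ e^{λ̄ t} ‖p(0)‖` for all `t ≥ 0`. -/
theorem sis_homogeneous_symmetric_GES
    {n : ℕ} (β : ℝ) (hβ : 0 ≤ β) (δ : Fin n → ℝ) (hδ : ∀ i, 0 ≤ δ i)
    (A : ℝ → Matrix (Fin n) (Fin n) ℝ)
    (hsym : ∀ t, 0 ≤ t → (A t).IsSymm)
    (hnn : ∀ t, 0 ≤ t → ∀ i j, 0 ≤ A t i j)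
    (hdiag : ∀ t, 0 ≤ t → ∀ i, A t i i = 0)
    (hbdd : ∃ C, ∀ t, 0 ≤ t → ∀ i j, |A t i j| ≤ C)
    (lam : ℝ) (hlam : lam < 0)
    (hsup : ∀ t, (ht : 0 ≤ t) →
      ∀ h : (β • A t - Matrix.diagonal δ).IsHermitian, (⨆ i, h.eigenvalues i) ≤ lam)
    (p : ℝ → Fin n → ℝ)
    (hode : ∀ t, 0 ≤ t → ∀ i, HasDerivAt (fun s => p s i)
      ((1 - p t i) * β * (∑ j, A t i j * p t j) - δ i * p t i) t)
    (h0 : ∀ i, 0 ≤ p 0 i) :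
    ∀ t, 0 ≤ t → eucNorm (p t) ≤ Real.exp (lam * t) * eucNorm (p 0) := by
  intro T hT
  rcases Nat.eq_zero_or_pos n with hn0 | hn
  · subst hn0
    simp [eucNorm]
  haveI : Nonempty (Fin n) := ⟨⟨0, hn⟩⟩
  have hT0 : (0:ℝ) ∈ Icc (0:ℝ) T := ⟨le_rfl, hT⟩
  -- boundedness of p on [0,T]
  have hcont : ∀ i, ContinuousOn (fun s => p s i) (Icc 0 T) := fun i s hs =>
    (hode s hs.1 i).continuousAt.continuousWithinAt
  have hbp : ∀ i, ∃ Ci, ∀ s ∈ Icc (0:ℝ) T, |p s i| ≤ Ci := by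
    intro i
    obtain ⟨Ci, hCi⟩ := isCompact_Icc.exists_bound_of_continuousOn (hcont i)
    exact ⟨Ci, fun s hs => by simpa [Real.norm_eq_abs] using hCi s hs⟩
  choose Cp hCp using hbp
  set Mb : ℝ := Finset.univ.sup' Finset.univ_nonempty Cp with hMbdef
  have hMb : ∀ s ∈ Icc (0:ℝ) T, ∀ i, |p s i| ≤ Mb := fun s hs i =>
    (hCp i s hs).trans (Finset.le_sup' Cp (Finset.mem_univ i))
  have hMb0 : 0 ≤ Mb := le_trans (abs_nonneg _) (hMb 0 hT0 ⟨0, hn⟩)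
  obtain ⟨CA, hCA⟩ := hbdd
  have hCA0 : 0 ≤ CA := le_trans (abs_nonneg _) (hCA 0 le_rfl ⟨0, hn⟩ ⟨0, hn⟩)
  -- Step 2 : nonnegativity of p on [0,T]
  set φ : ℝ → ℝ := fun s => ∑ i, min (p s i) 0 ^ 2 with hφdef
  set K : ℝ := 2 * (1 + Mb) * β * CA * n with hKdef
  have hφd : ∀ s ∈ Icc (0:ℝ) T, HasDerivAt φ
      (∑ i, 2 * min (p s i) 0 *
        ((1 - p s i) * β * (∑ j, A s i j * p s j) - δ i * p s i)) s := by
    intro s hs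
    refine HasDerivAt.fun_sum fun i _ => ?_
    have h1 := hode s hs.1 i
    have h2 := sis_hasDerivAt_minSq (p s i)
    have h3 := h2.comp s h1
    exact h3
  have hφ0 : φ 0 ≤ 0 := by
    have : φ 0 = 0 := Finset.sum_eq_zero fun i _ => by simp [min_eq_right (h0 i)]
    simp [this]
  have hφb : ∀ s ∈ Ico (0:ℝ) T, (∑ i, 2 * min (p s i) 0 *
      ((1 - p s i) * β * (∑ j, A s i j * p s j) - δ i * p s i)) ≤ K * φ s := by
    intro s hs
    have hsI : s ∈ Icc (0:ℝ) T := Ico_subset_Icc_self hs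
    set q : Fin n → ℝ := fun i => min (p s i) 0 with hqdef
    have hq0 : ∀ i, q i ≤ 0 := fun i => min_le_right _ _
    have hqp : ∀ i, q i ≤ p s i := fun i => min_le_left _ _
    have hterm : ∀ i, 2 * q i *
        ((1 - p s i) * β * (∑ j, A s i j * p s j) - δ i * p s i) ≤
        2 * (1 + Mb) * β * CA * (|q i| * ∑ j, |q j|) := by
      intro i
      have hqpi : q i * p s i = q i ^ 2 := by
        rcases le_or_gt 0 (p s i) with h' | h'
        · simp [hqdef, min_eq_right h']
        · simp [hqdef, min_eq_left h'.le]; ring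
      have hdel : 0 ≤ 2 * δ i * (q i * p s i) := by
        rw [hqpi]
        exact mul_nonneg (by linarith [hδ i]) (sq_nonneg _)
      have hmain : 2 * q i * ((1 - p s i) * β * (∑ j, A s i j * p s j)) ≤
          2 * (1 + Mb) * β * CA * (|q i| * ∑ j, |q j|) := by
        rcases le_or_gt 0 (p s i) with h' | h'
        · have : q i = 0 := by simp [hqdef, min_eq_right h']
          rw [this]
          have : (0:ℝ) ≤ 2 * (1 + Mb) * β * CA * (|(0:ℝ)| * ∑ j, |q j|) := by positivity
          simpa using this
        · have hqi : q i = p s i := by simp [hqdef, min_eq_left h'.le]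
          set S : ℝ := ∑ j, A s i j * p s j with hSdef
          have hS1 : ∑ j, A s i j * q j ≤ S := Finset.sum_le_sum fun j _ =>
            mul_le_mul_of_nonneg_left (hqp j) (hnn s hs.1 i j)
          have hS2 : -(CA * ∑ j, |q j|) ≤ ∑ j, A s i j * q j := by
            rw [Finset.mul_sum, ← Finset.sum_neg_distrib]
            refine Finset.sum_le_sum fun j _ => ?_
            have habs : |A s i j * q j| ≤ CA * |q j| := by
              rw [abs_mul]
              exact mul_le_mul_of_nonneg_right (hCA s hs.1 i j) (abs_nonneg _)
            linarith [(abs_le.mp habs).1]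
          have hR0 : 0 ≤ CA * (|q i| * ∑ j, |q j|) := by positivity
          have hqS : q i * S ≤ CA * (|q i| * ∑ j, |q j|) := by
            have h1 : q i * S ≤ q i * ∑ j, A s i j * q j :=
              mul_le_mul_of_nonpos_left hS1 (hq0 i)
            have h2 : q i * (∑ j, A s i j * q j) ≤ q i * (-(CA * ∑ j, |q j|)) :=
              mul_le_mul_of_nonpos_left hS2 (hq0 i)
            have h3 : q i * (-(CA * ∑ j, |q j|)) = (-q i) * (CA * ∑ j, |q j|) := by ring
            have h4 : -q i = |q i| := by
              rw [abs_of_nonpos (hq0 i)]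
            calc q i * S ≤ q i * (∑ j, A s i j * q j) := h1
              _ ≤ q i * (-(CA * ∑ j, |q j|)) := h2
              _ = |q i| * (CA * ∑ j, |q j|) := by rw [h3, h4]
              _ = CA * (|q i| * ∑ j, |q j|) := by ring
          have h1p : (0:ℝ) ≤ 1 - p s i := by linarith
          have h1p' : 1 - p s i ≤ 1 + Mb := by
            have := (abs_le.mp (hMb s hsI i)).1
            linarith
          calc 2 * q i * ((1 - p s i) * β * S)
              = 2 * β * ((1 - p s i) * (q i * S)) := by ring
            _ ≤ 2 * β * ((1 - p s i) * (CA * (|q i| * ∑ j, |q j|))) := by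
                refine mul_le_mul_of_nonneg_left (mul_le_mul_of_nonneg_left hqS h1p) ?_
                positivity
            _ ≤ 2 * β * ((1 + Mb) * (CA * (|q i| * ∑ j, |q j|))) := by
                refine mul_le_mul_of_nonneg_left (mul_le_mul_of_nonneg_right h1p' hR0) ?_
                positivity
            _ = 2 * (1 + Mb) * β * CA * (|q i| * ∑ j, |q j|) := by ring
      calc 2 * q i * ((1 - p s i) * β * (∑ j, A s i j * p s j) - δ i * p s i)
          = 2 * q i * ((1 - p s i) * β * (∑ j, A s i j * p s j))
            - 2 * δ i * (q i * p s i) := by ring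
        _ ≤ 2 * (1 + Mb) * β * CA * (|q i| * ∑ j, |q j|) - 0 := by
            exact sub_le_sub hmain hdel
        _ = 2 * (1 + Mb) * β * CA * (|q i| * ∑ j, |q j|) := by ring
    have hdouble : ∑ i, (|q i| * ∑ j, |q j|) ≤ (n : ℝ) * φ s := by
      have e1 : ∑ i, (|q i| * ∑ j, |q j|) = ∑ i, ∑ j, |q i| * |q j| := by
        exact Finset.sum_congr rfl fun i _ => Finset.mul_sum _ _ _
      have e2 : ∑ i, ∑ j, |q i| * |q j| ≤ ∑ i, ∑ j, (q i ^ 2 + q j ^ 2) / 2 := by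
        refine Finset.sum_le_sum fun i _ => Finset.sum_le_sum fun j _ => ?_
        nlinarith [sq_nonneg (|q i| - |q j|), sq_abs (q i), sq_abs (q j), abs_nonneg (q i),
          abs_nonneg (q j)]
      have e3 : ∑ i, ∑ j, (q i ^ 2 + q j ^ 2) / 2 = (n : ℝ) * φ s := by
        have : ∀ i, ∑ j, (q i ^ 2 + q j ^ 2) / 2 = ((n : ℝ) * q i ^ 2 + φ s) / 2 := by
          intro i
          rw [← Finset.sum_div, Finset.sum_add_distrib, Finset.sum_const, Finset.card_univ,
            Fintype.card_fin, nsmul_eq_mul]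
        rw [Finset.sum_congr rfl fun i _ => this i]
        rw [← Finset.sum_div, Finset.sum_add_distrib, ← Finset.mul_sum, Finset.sum_const,
          Finset.card_univ, Fintype.card_fin, nsmul_eq_mul]
        have : ∑ i, q i ^ 2 = φ s := rfl
        rw [this]; ring
      linarith [e1 ▸ le_trans e2 (le_of_eq e3)]
    calc (∑ i, 2 * min (p s i) 0 *
        ((1 - p s i) * β * (∑ j, A s i j * p s j) - δ i * p s i))
        ≤ ∑ i, 2 * (1 + Mb) * β * CA * (|q i| * ∑ j, |q j|) :=
          Finset.sum_le_sum fun i _ => hterm i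
      _ = 2 * (1 + Mb) * β * CA * ∑ i, (|q i| * ∑ j, |q j|) := by
          rw [Finset.mul_sum]
      _ ≤ 2 * (1 + Mb) * β * CA * ((n : ℝ) * φ s) := by
          refine mul_le_mul_of_nonneg_left hdouble ?_
          positivity
      _ = K * φ s := by rw [hKdef]; ring
  have hφle : ∀ s ∈ Icc (0:ℝ) T, φ s ≤ 0 := by
    intro s hs
    have := sis_gronwall hφd hφ0 hφb s hs
    simpa using this
  have hpnn : ∀ s ∈ Icc (0:ℝ) T, ∀ i, 0 ≤ p s i := by
    intro s hs i
    have h1 : φ s = 0 := le_antisymm (hφle s hs)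
      (Finset.sum_nonneg fun i _ => sq_nonneg _)
    have h2 : min (p s i) 0 ^ 2 = 0 := by
      have := (Finset.sum_eq_zero_iff_of_nonneg fun j _ => sq_nonneg (min (p s j) 0)).mp h1
      exact this i (Finset.mem_univ i)
    have h3 : min (p s i) 0 = 0 := by
      exact pow_eq_zero_iff (two_ne_zero) |>.mp h2
    calc (0:ℝ) = min (p s i) 0 := h3.symm
      _ ≤ p s i := min_le_left _ _
  -- Step 3 : Lyapunov function V
  set V : ℝ → ℝ := fun s => ∑ i, p s i ^ 2 with hVdef
  have hVd : ∀ s ∈ Icc (0:ℝ) T, HasDerivAt V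
      (∑ i, 2 * p s i *
        ((1 - p s i) * β * (∑ j, A s i j * p s j) - δ i * p s i)) s := by
    intro s hs
    refine HasDerivAt.fun_sum fun i _ => ?_
    have := (hode s hs.1 i).fun_pow 2
    simpa [pow_one] using this
  have hVb : ∀ s ∈ Ico (0:ℝ) T, (∑ i, 2 * p s i *
      ((1 - p s i) * β * (∑ j, A s i j * p s j) - δ i * p s i)) ≤ (2 * lam) * V s := by
    intro s hs
    have hsI : s ∈ Icc (0:ℝ) T := Ico_subset_Icc_self hs
    set M : Matrix (Fin n) (Fin n) ℝ := β • A s - Matrix.diagonal δ with hMdef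
    have hH : M.IsHermitian := by
      show Mᴴ = M
      rw [hMdef, Matrix.conjTranspose_eq_transpose_of_trivial, Matrix.transpose_sub,
        Matrix.transpose_smul, Matrix.diagonal_transpose, (hsym s hs.1)]
    have hle := hsup s hs.1 hH
    have hnn2 : (0:ℝ) ≤ p s ⬝ᵥ p s :=
      Finset.sum_nonneg fun i _ => mul_self_nonneg _
    have hq2 : p s ⬝ᵥ (M *ᵥ p s) ≤ lam * (p s ⬝ᵥ p s) :=
      (sis_quad_le M hH (p s)).trans (mul_le_mul_of_nonneg_right hle hnn2)
    have hdot : p s ⬝ᵥ (M *ᵥ p s) =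
        ∑ i, p s i * (β * (∑ j, A s i j * p s j) - δ i * p s i) := by
      rw [hMdef, Matrix.sub_mulVec, Matrix.smul_mulVec]
      simp only [dotProduct, Pi.sub_apply, Pi.smul_apply, smul_eq_mul,
        Matrix.mulVec_diagonal, Matrix.mulVec]
      refine Finset.sum_congr rfl fun i _ => ?_
      have hd : ∑ x, Matrix.diagonal δ i x * p s x = δ i * p s i := by
        rw [Finset.sum_eq_single i]
        · simp
        · intro b _ hb
          simp [Matrix.diagonal_apply_ne δ (Ne.symm hb)]
        · intro h
          exact absurd (Finset.mem_univ i) h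
      rw [hd]
    have hposS : (0:ℝ) ≤ ∑ i, p s i ^ 2 * (∑ j, A s i j * p s j) :=
      Finset.sum_nonneg fun i _ => mul_nonneg (sq_nonneg _)
        (Finset.sum_nonneg fun j _ => mul_nonneg (hnn s hs.1 i j) (hpnn s hsI j))
    have hsplit : ∑ i, p s i *
        ((1 - p s i) * β * (∑ j, A s i j * p s j) - δ i * p s i) =
        (∑ i, p s i * (β * (∑ j, A s i j * p s j) - δ i * p s i))
        - β * ∑ i, p s i ^ 2 * (∑ j, A s i j * p s j) := by
      rw [Finset.mul_sum, ← Finset.sum_sub_distrib]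
      refine Finset.sum_congr rfl fun i _ => ?_
      ring
    have hVeq : p s ⬝ᵥ p s = V s := by
      simp only [dotProduct, hVdef]
      exact Finset.sum_congr rfl fun i _ => (sq (p s i)).symm
    have key : ∑ i, p s i *
        ((1 - p s i) * β * (∑ j, A s i j * p s j) - δ i * p s i) ≤ lam * V s := by
      rw [hsplit, ← hdot]
      have : (0:ℝ) ≤ β * ∑ i, p s i ^ 2 * (∑ j, A s i j * p s j) :=
        mul_nonneg hβ hposS
      calc p s ⬝ᵥ (M *ᵥ p s) - β * ∑ i, p s i ^ 2 * (∑ j, A s i j * p s j)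
          ≤ p s ⬝ᵥ (M *ᵥ p s) := by linarith
        _ ≤ lam * (p s ⬝ᵥ p s) := hq2
        _ = lam * V s := by rw [hVeq]
    calc (∑ i, 2 * p s i *
        ((1 - p s i) * β * (∑ j, A s i j * p s j) - δ i * p s i))
        = 2 * ∑ i, p s i *
          ((1 - p s i) * β * (∑ j, A s i j * p s j) - δ i * p s i) := by
          rw [Finset.mul_sum]
          exact Finset.sum_congr rfl fun i _ => by ring
      _ ≤ 2 * (lam * V s) := by linarith [key]
      _ = (2 * lam) * V s := by ring
  have hVfin : V T ≤ V 0 * Real.exp ((2 * lam) * T) :=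
    sis_gronwall hVd le_rfl hVb T ⟨hT, le_rfl⟩
  -- conclude
  have hV0 : (0:ℝ) ≤ V 0 := Finset.sum_nonneg fun i _ => sq_nonneg _
  have heuc : eucNorm (p T) = Real.sqrt (V T) := rfl
  have heuc0 : eucNorm (p 0) = Real.sqrt (V 0) := rfl
  rw [heuc, heuc0]
  have h1 : Real.sqrt (V T) ≤ Real.sqrt (V 0 * Real.exp ((2 * lam) * T)) :=
    Real.sqrt_le_sqrt hVfin
  have h2 : Real.sqrt (V 0 * Real.exp ((2 * lam) * T)) =
      Real.exp (lam * T) * Real.sqrt (V 0) := by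
    rw [Real.sqrt_mul hV0]
    have : Real.exp ((2 * lam) * T) = Real.exp (lam * T) ^ 2 := by
      rw [← Real.exp_nat_mul]
      ring_nf
    rw [this, Real.sqrt_sq (Real.exp_nonneg _)]
    ring
  linarith [h1, h2 ▸ h1]
end

section
/- Let M : [0,∞) → ℝ^{n×n} be continuously differentiable with ‖M(t)‖ ≤ L for all t ≥ 0 and sup_{t≥0} s₁(M(t)) < 0, where s₁ is the largest real part of the eigenvalues. Suppose γ₁ > 0 is a finite constant such that ‖∫₀^∞ exp(M(t)ᵀτ) exp(M(t)τ) dτ‖ ≤ γ₁ for all t ≥ 0, and that sup_{t≥0} ‖Ṁ(t)‖ < 1/(2γ₁²). Then the origin of the linear time-varying system ẋ(t) = M(t)x(t) is globally exponentially stable: there exist c, λ > 0 such that every solution satisfies ‖x(t)‖ ≤ c e^{−λt} ‖x(0)‖ for all t ≥ 0. -/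
/-!
For a constant matrix `A` with integrable `exp(Aᵀτ) exp(Aτ)`, differentiating `τ ↦ yᵀ S y` along
`y(τ) = exp(Aτ) v` and integrating over `[0, ∞)` (where `|y|² → 0`, being integrable with
integrable derivative) shows that `P = gram A` solves the Lyapunov equation `AᵀP + PA = -I`, that
`|v|² ≤ 2‖A‖ vᵀPv`, and, comparing the Lyapunov equations of `A` and `B`, that
`|vᵀ(gram A - gram B)v| ≤ 2γ²‖A - B‖ |v|²` when both Gramians have norm at most `γ`.

Along a solution of `ẋ = M(t)x`, the frozen-time Lyapunov function `V(t) = x(t)ᵀ gram(M(t)) x(t)`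
therefore has right upper Dini derivative at most `-(1 - 2γ₁² sup‖Ṁ‖)|x|² ≤ -k V` with `k > 0`,
since `V ≤ γ₁|x|²`. Grönwall's inequality gives `V(t) ≤ V(0) e^{-kt}`, and `|x|² ≤ 2L V` turns this
into exponential decay of `x`.
-/

open Matrix MeasureTheory

/-- Induced 2-norm of a real matrix. -/
noncomputable def mnorm {m n : ℕ} (M : Matrix (Fin m) (Fin n) ℝ) : ℝ :=
  ‖LinearMap.toContinuousLinearMap (Matrix.toEuclideanLin M)‖

/-- Matrix exponential. -/
noncomputable def mexp {n : ℕ} (M : Matrix (Fin n) (Fin n) ℝ) : Matrix (Fin n) (Fin n) ℝ :=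
  NormedSpace.exp M

/-- The observability Gramian `∫₀^∞ exp(Mᵀτ) exp(Mτ) dτ`, defined entrywise. -/
noncomputable def gram {n : ℕ} (M : Matrix (Fin n) (Fin n) ℝ) : Matrix (Fin n) (Fin n) ℝ :=
  Matrix.of fun i j => ∫ τ in Set.Ici (0 : ℝ), (mexp (τ • Mᵀ) * mexp (τ • M)) i j

open Set Filter Topology
open scoped Matrix.Norms.L2Operator

section Euclidean

variable {ι : Type*} [Fintype ι]

theorem dotProduct_self_nonneg_real (v : ι → ℝ) : 0 ≤ v ⬝ᵥ v :=
  Finset.sum_nonneg fun i _ => mul_self_nonneg (v i)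

theorem abs_dotProduct_mulVec_self_le [DecidableEq ι] (S : Matrix ι ι ℝ) (v : ι → ℝ) :
    |v ⬝ᵥ (S *ᵥ v)| ≤ ‖S‖ * (v ⬝ᵥ v) := by
  set w : EuclideanSpace ℝ ι := WithLp.toLp 2 v
  have hinner : v ⬝ᵥ (S *ᵥ v) = inner ℝ w (WithLp.toLp 2 (S *ᵥ v)) := by
    rw [EuclideanSpace.inner_eq_star_dotProduct, dotProduct_comm]; rfl
  have hw : ‖w‖ ^ 2 = v ⬝ᵥ v := by
    rw [← real_inner_self_eq_norm_sq, EuclideanSpace.inner_eq_star_dotProduct]; rfl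
  calc |v ⬝ᵥ (S *ᵥ v)| ≤ ‖w‖ * ‖WithLp.toLp 2 (S *ᵥ v)‖ := hinner ▸ abs_real_inner_le_norm _ _
    _ ≤ ‖w‖ * (‖S‖ * ‖w‖) := by gcongr; exact S.l2_opNorm_mulVec w
    _ = ‖S‖ * (v ⬝ᵥ v) := by rw [← hw]; ring

theorem dotProduct_mulVec_self_le_of_norm_le [DecidableEq ι] {S : Matrix ι ι ℝ} {γ : ℝ}
    (hS : ‖S‖ ≤ γ) (v : ι → ℝ) : v ⬝ᵥ (S *ᵥ v) ≤ γ * (v ⬝ᵥ v) :=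
  (le_abs_self _).trans ((abs_dotProduct_mulVec_self_le S v).trans
    (mul_le_mul_of_nonneg_right hS (dotProduct_self_nonneg_real v)))

theorem l2_opNorm_transpose_real [DecidableEq ι] (A : Matrix ι ι ℝ) : ‖Aᵀ‖ = ‖A‖ := by
  rw [← conjTranspose_eq_transpose_of_trivial, l2_opNorm_conjTranspose]

theorem dotProduct_transpose_mul_add_mul_mulVec (A S : Matrix ι ι ℝ) (y : ι → ℝ) :
    y ⬝ᵥ ((Aᵀ * S + S * A) *ᵥ y) = (A *ᵥ y) ⬝ᵥ (S *ᵥ y) + y ⬝ᵥ (S *ᵥ (A *ᵥ y)) := by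
  rw [add_mulVec, dotProduct_add, ← mulVec_mulVec, ← mulVec_mulVec, dotProduct_mulVec,
    vecMul_transpose]

theorem HasDerivAt.dotProduct {y w : ℝ → ι → ℝ} {y' w' : ι → ℝ} {t : ℝ}
    (hy : HasDerivAt y y' t) (hw : HasDerivAt w w' t) :
    HasDerivAt (fun s => y s ⬝ᵥ w s) (y' ⬝ᵥ w t + y t ⬝ᵥ w') t := by
  have h := HasDerivAt.fun_sum (u := Finset.univ) fun i _ =>
    (hasDerivAt_pi.1 hy i).fun_mul (hasDerivAt_pi.1 hw i)
  rwa [Finset.sum_add_distrib] at h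

theorem HasDerivAt.const_mulVec {κ : Type*} [Fintype κ] [DecidableEq ι] {y : ℝ → ι → ℝ}
    {y' : ι → ℝ} {t : ℝ} (hy : HasDerivAt y y' t) (S : Matrix κ ι ℝ) :
    HasDerivAt (fun s => S *ᵥ y s) (S *ᵥ y') t :=
  (LinearMap.toContinuousLinearMap (toLin' S)).hasFDerivAt.comp_hasDerivAt t hy

theorem HasDerivAt.mulVec_const {κ : Type*} [Fintype κ] [DecidableEq ι] [DecidableEq κ]
    {F : ℝ → Matrix κ ι ℝ} {F' : Matrix κ ι ℝ} {t : ℝ} (hF : HasDerivAt F F' t) (v : ι → ℝ) :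
    HasDerivAt (fun s => F s *ᵥ v) (F' *ᵥ v) t :=
  (LinearMap.toContinuousLinearMap ((LinearMap.applyₗ v).comp
    (toLin' (R := ℝ) (m := κ) (n := ι)).toLinearMap)).hasFDerivAt.comp_hasDerivAt t hF

theorem hasDerivAt_dotProduct_mulVec_self [DecidableEq ι] {y : ℝ → ι → ℝ} {A : Matrix ι ι ℝ}
    {t : ℝ} (hy : HasDerivAt y (A *ᵥ y t) t) (S : Matrix ι ι ℝ) :
    HasDerivAt (fun s => y s ⬝ᵥ (S *ᵥ y s)) (y t ⬝ᵥ ((Aᵀ * S + S * A) *ᵥ y t)) t := by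
  rw [dotProduct_transpose_mul_add_mul_mulVec]
  exact hy.dotProduct (hy.const_mulVec S)

end Euclidean

theorem hasDerivAt_matrix_of_entries {m n : Type*} [Fintype m] [Fintype n] [DecidableEq m]
    [DecidableEq n] {F : ℝ → Matrix m n ℝ} {F' : Matrix m n ℝ} {t : ℝ}
    (h : ∀ i j, HasDerivAt (fun s => F s i j) (F' i j) t) : HasDerivAt F F' t := by
  have hsum : ∀ A : Matrix m n ℝ, A = ∑ i, ∑ j, A i j • single i j (1 : ℝ) := fun A => by
    simp_rw [smul_single, smul_eq_mul, mul_one]; exact matrix_eq_sum_single A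
  rw [funext fun s => hsum (F s), hsum F']
  exact HasDerivAt.fun_sum fun i _ => HasDerivAt.fun_sum fun j _ => (h i j).smul_const _

theorem norm_sub_le_of_hasDerivAt_entries {m n : Type*} [Fintype m] [Fintype n] [DecidableEq m]
    [DecidableEq n] {M M' : ℝ → Matrix m n ℝ} {r : ℝ}
    (hderiv : ∀ t, 0 ≤ t → ∀ i j, HasDerivAt (fun s => M s i j) (M' t i j) t)
    (hdot : ∀ t, 0 ≤ t → ‖M' t‖ ≤ r) {s t : ℝ} (hs : 0 ≤ s) (ht : 0 ≤ t) :
    ‖M t - M s‖ ≤ r * |t - s| :=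
  (convex_Ici 0).norm_image_sub_le_of_norm_hasDerivWithin_le
    (fun u hu => (hasDerivAt_matrix_of_entries (hderiv u hu)).hasDerivWithinAt) hdot hs ht

section Integral

variable {α m n : Type*} [MeasurableSpace α] {μ : Measure α} [Fintype m] [Fintype n]
  {G : α → Matrix m n ℝ}

theorem integrable_dotProduct_mulVec (hG : ∀ i j, Integrable (fun a => G a i j) μ)
    (u : m → ℝ) (v : n → ℝ) : Integrable (fun a => u ⬝ᵥ (G a *ᵥ v)) μ :=
  integrable_finsetSum _ fun i _ => (integrable_finsetSum _ fun j _ =>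
    (hG i j).mul_const (v j)).const_mul (u i)

theorem dotProduct_integral_mulVec (hG : ∀ i j, Integrable (fun a => G a i j) μ)
    (u : m → ℝ) (v : n → ℝ) :
    u ⬝ᵥ (of (fun i j => ∫ a, G a i j ∂μ) *ᵥ v) = ∫ a, u ⬝ᵥ (G a *ᵥ v) ∂μ := by
  simp only [dotProduct, mulVec, of_apply]
  rw [integral_finsetSum _ fun i _ => (integrable_finsetSum _ fun j _ =>
    (hG i j).mul_const (v j)).const_mul (u i)]
  refine Finset.sum_congr rfl fun i _ => ?_
  rw [integral_const_mul, integral_finsetSum _ fun j _ => (hG i j).mul_const (v j)]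
  simp only [integral_mul_const]

end Integral

section Gramian

variable {n : ℕ}

/-- Without this, the entrywise integrals defining `gram A` silently take the junk value `0`. -/
def GramianIntegrable (A : Matrix (Fin n) (Fin n) ℝ) : Prop :=
  ∀ i j, IntegrableOn (fun τ => (mexp (τ • Aᵀ) * mexp (τ • A)) i j) (Ici (0 : ℝ))

theorem hasDerivAt_mexp_smul_mulVec (A : Matrix (Fin n) (Fin n) ℝ) (v : Fin n → ℝ) (τ : ℝ) :
    HasDerivAt (fun s => mexp (s • A) *ᵥ v) (A *ᵥ (mexp (τ • A) *ᵥ v)) τ := by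
  rw [mulVec_mulVec]
  exact (hasDerivAt_exp_smul_const' A τ).mulVec_const v

theorem continuous_mexp_smul_mulVec (A : Matrix (Fin n) (Fin n) ℝ) (v : Fin n → ℝ) :
    Continuous fun τ : ℝ => mexp (τ • A) *ᵥ v :=
  continuous_iff_continuousAt.2 fun τ => (hasDerivAt_mexp_smul_mulVec A v τ).continuousAt

theorem mulVec_mexp_smul_mulVec (A : Matrix (Fin n) (Fin n) ℝ) (v : Fin n → ℝ) (τ : ℝ) :
    A *ᵥ (mexp (τ • A) *ᵥ v) = mexp (τ • A) *ᵥ (A *ᵥ v) := by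
  rw [mulVec_mulVec, mulVec_mulVec]
  exact congrArg (· *ᵥ v) (((Commute.refl A).smul_left τ).exp_left).eq.symm

theorem mexp_zero_smul_mulVec (A : Matrix (Fin n) (Fin n) ℝ) (v : Fin n → ℝ) :
    mexp ((0 : ℝ) • A) *ᵥ v = v := by
  rw [zero_smul, mexp, NormedSpace.exp_zero, one_mulVec]

theorem dotProduct_mexp_transpose_mul_mulVec (A : Matrix (Fin n) (Fin n) ℝ) (u v : Fin n → ℝ)
    (τ : ℝ) : u ⬝ᵥ ((mexp (τ • Aᵀ) * mexp (τ • A)) *ᵥ v) =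
      (mexp (τ • A) *ᵥ u) ⬝ᵥ (mexp (τ • A) *ᵥ v) := by
  rw [← transpose_smul, mexp, exp_transpose, ← mulVec_mulVec, dotProduct_mulVec,
    vecMul_transpose, mexp]

namespace GramianIntegrable

variable {A B : Matrix (Fin n) (Fin n) ℝ}

theorem integrableOn_Ioi (hA : GramianIntegrable A) (i j : Fin n) :
    IntegrableOn (fun τ => (mexp (τ • Aᵀ) * mexp (τ • A)) i j) (Ioi (0 : ℝ)) :=
  (hA i j).mono_set Ioi_subset_Ici_self

theorem integrableOn_dotProduct (hA : GramianIntegrable A) (u v : Fin n → ℝ) :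
    IntegrableOn (fun τ => (mexp (τ • A) *ᵥ u) ⬝ᵥ (mexp (τ • A) *ᵥ v)) (Ioi (0 : ℝ)) := by
  have h := integrable_dotProduct_mulVec hA.integrableOn_Ioi u v
  simp only [dotProduct_mexp_transpose_mul_mulVec] at h
  exact h

theorem dotProduct_gram_mulVec (hA : GramianIntegrable A) (u v : Fin n → ℝ) :
    u ⬝ᵥ (gram A *ᵥ v) = ∫ τ in Ioi (0 : ℝ), (mexp (τ • A) *ᵥ u) ⬝ᵥ (mexp (τ • A) *ᵥ v) := by
  have hgram : gram A = of fun i j => ∫ τ in Ioi (0 : ℝ), (mexp (τ • Aᵀ) * mexp (τ • A)) i j := by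
    ext i j
    exact integral_Ici_eq_integral_Ioi
  rw [hgram, dotProduct_integral_mulVec hA.integrableOn_Ioi]
  simp only [dotProduct_mexp_transpose_mul_mulVec]

theorem dotProduct_gram_mulVec_self_nonneg (hA : GramianIntegrable A) (v : Fin n → ℝ) :
    0 ≤ v ⬝ᵥ (gram A *ᵥ v) := by
  rw [hA.dotProduct_gram_mulVec]
  exact setIntegral_nonneg measurableSet_Ioi fun τ _ => dotProduct_self_nonneg_real _

theorem integrableOn_dotProduct_mulVec (hA : GramianIntegrable A) (S : Matrix (Fin n) (Fin n) ℝ)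
    (v : Fin n → ℝ) :
    IntegrableOn (fun τ => (mexp (τ • A) *ᵥ v) ⬝ᵥ (S *ᵥ (mexp (τ • A) *ᵥ v))) (Ioi (0 : ℝ)) := by
  have hy := continuous_mexp_smul_mulVec A v
  refine Integrable.mono' ((hA.integrableOn_dotProduct v v).const_mul ‖S‖)
    (hy.dotProduct (continuous_const.matrix_mulVec hy)).aestronglyMeasurable ?_
  exact ae_of_all _ fun τ => abs_dotProduct_mulVec_self_le S _

theorem tendsto_dotProduct_mulVec (hA : GramianIntegrable A) (S : Matrix (Fin n) (Fin n) ℝ)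
    (v : Fin n → ℝ) :
    Tendsto (fun τ : ℝ => (mexp (τ • A) *ᵥ v) ⬝ᵥ (S *ᵥ (mexp (τ • A) *ᵥ v))) atTop (𝓝 0) := by
  have hsq : Tendsto (fun τ : ℝ => (mexp (τ • A) *ᵥ v) ⬝ᵥ (mexp (τ • A) *ᵥ v)) atTop (𝓝 0) := by
    refine tendsto_zero_of_hasDerivAt_of_integrableOn_Ioi (a := (0 : ℝ)) (fun τ _ => ?_)
      (hA.integrableOn_dotProduct_mulVec (Aᵀ * 1 + 1 * A) v) (hA.integrableOn_dotProduct v v)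
    simpa only [one_mulVec] using
      hasDerivAt_dotProduct_mulVec_self (hasDerivAt_mexp_smul_mulVec A v τ) 1
  refine squeeze_zero_norm (fun τ => abs_dotProduct_mulVec_self_le S _) ?_
  simpa using hsq.const_mul ‖S‖

theorem dotProduct_mulVec_eq_neg_integral (hA : GramianIntegrable A)
    (S : Matrix (Fin n) (Fin n) ℝ) (v : Fin n → ℝ) :
    v ⬝ᵥ (S *ᵥ v) =
      -∫ τ in Ioi (0 : ℝ), (mexp (τ • A) *ᵥ v) ⬝ᵥ ((Aᵀ * S + S * A) *ᵥ (mexp (τ • A) *ᵥ v)) := by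
  rw [integral_Ioi_of_hasDerivAt_of_tendsto' (fun τ _ => hasDerivAt_dotProduct_mulVec_self
      (hasDerivAt_mexp_smul_mulVec A v τ) S) (hA.integrableOn_dotProduct_mulVec _ v)
      (hA.tendsto_dotProduct_mulVec S v), mexp_zero_smul_mulVec]
  ring

theorem abs_integral_dotProduct_mulVec_le (hA : GramianIntegrable A) (T : Matrix (Fin n) (Fin n) ℝ)
    (v : Fin n → ℝ) :
    |∫ τ in Ioi (0 : ℝ), (mexp (τ • A) *ᵥ v) ⬝ᵥ (T *ᵥ (mexp (τ • A) *ᵥ v))| ≤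
      ‖T‖ * (v ⬝ᵥ (gram A *ᵥ v)) := by
  rw [hA.dotProduct_gram_mulVec, ← integral_const_mul]
  refine abs_integral_le_integral_abs.trans (setIntegral_mono (hA.integrableOn_dotProduct_mulVec T v).abs
    ((hA.integrableOn_dotProduct v v).const_mul _) fun τ => abs_dotProduct_mulVec_self_le T _)

theorem lyapunov (hA : GramianIntegrable A) (v : Fin n → ℝ) :
    v ⬝ᵥ ((Aᵀ * gram A + gram A * A) *ᵥ v) = -(v ⬝ᵥ v) := by
  have hflow : ∀ τ : ℝ, (mexp (τ • A) *ᵥ v) ⬝ᵥ ((Aᵀ * 1 + 1 * A) *ᵥ (mexp (τ • A) *ᵥ v)) =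
      (mexp (τ • A) *ᵥ (A *ᵥ v)) ⬝ᵥ (mexp (τ • A) *ᵥ v) +
        (mexp (τ • A) *ᵥ v) ⬝ᵥ (mexp (τ • A) *ᵥ (A *ᵥ v)) := fun τ => by
    rw [dotProduct_transpose_mul_add_mul_mulVec, one_mulVec, one_mulVec, mulVec_mexp_smul_mulVec]
  have h := hA.dotProduct_mulVec_eq_neg_integral 1 v
  simp only [one_mulVec, hflow] at h
  rw [dotProduct_transpose_mul_add_mul_mulVec, hA.dotProduct_gram_mulVec,
    hA.dotProduct_gram_mulVec, ← integral_add (hA.integrableOn_dotProduct _ _)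
    (hA.integrableOn_dotProduct _ _), h, neg_neg]

theorem dotProduct_self_le (hA : GramianIntegrable A) (v : Fin n → ℝ) :
    v ⬝ᵥ v ≤ 2 * ‖A‖ * (v ⬝ᵥ (gram A *ᵥ v)) := by
  have h := hA.dotProduct_mulVec_eq_neg_integral 1 v
  rw [one_mulVec] at h
  have hnorm : ‖Aᵀ * 1 + 1 * A‖ ≤ 2 * ‖A‖ := by
    rw [mul_one, one_mul, two_mul]
    exact (norm_add_le _ _).trans_eq (by rw [l2_opNorm_transpose_real])
  calc v ⬝ᵥ v ≤ |∫ τ in Ioi (0 : ℝ), (mexp (τ • A) *ᵥ v) ⬝ᵥ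
        ((Aᵀ * 1 + 1 * A) *ᵥ (mexp (τ • A) *ᵥ v))| := h.trans_le (neg_le_abs _)
    _ ≤ ‖Aᵀ * 1 + 1 * A‖ * (v ⬝ᵥ (gram A *ᵥ v)) := hA.abs_integral_dotProduct_mulVec_le _ v
    _ ≤ 2 * ‖A‖ * (v ⬝ᵥ (gram A *ᵥ v)) := by
      gcongr
      exact hA.dotProduct_gram_mulVec_self_nonneg v

theorem abs_dotProduct_gram_sub_mulVec_le (hA : GramianIntegrable A) (hB : GramianIntegrable B)
    (v : Fin n → ℝ) :
    |v ⬝ᵥ ((gram A - gram B) *ᵥ v)| ≤ 2 * ‖A - B‖ * ‖gram B‖ * (v ⬝ᵥ (gram A *ᵥ v)) := by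
  set T := (A - B)ᵀ * gram B + gram B * (A - B)
  have hflow : ∀ y, y ⬝ᵥ ((Aᵀ * (gram A - gram B) + (gram A - gram B) * A) *ᵥ y) =
      -(y ⬝ᵥ (T *ᵥ y)) := fun y => by
    have hmat : Aᵀ * (gram A - gram B) + (gram A - gram B) * A =
        (Aᵀ * gram A + gram A * A) - (Bᵀ * gram B + gram B * B) - T := by
      simp only [T, transpose_sub, mul_sub, sub_mul]; abel
    rw [hmat, sub_mulVec, sub_mulVec, dotProduct_sub, dotProduct_sub, hA.lyapunov, hB.lyapunov]
    ring
  have hT : ‖T‖ ≤ 2 * ‖A - B‖ * ‖gram B‖ :=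
    calc ‖T‖ ≤ ‖(A - B)ᵀ‖ * ‖gram B‖ + ‖gram B‖ * ‖A - B‖ :=
          (norm_add_le _ _).trans (add_le_add (norm_mul_le _ _) (norm_mul_le _ _))
      _ = 2 * ‖A - B‖ * ‖gram B‖ := by rw [l2_opNorm_transpose_real]; ring
  rw [hA.dotProduct_mulVec_eq_neg_integral]
  simp only [hflow, integral_neg, neg_neg]
  calc _ ≤ ‖T‖ * (v ⬝ᵥ (gram A *ᵥ v)) := hA.abs_integral_dotProduct_mulVec_le T v
    _ ≤ _ := by gcongr; exact hA.dotProduct_gram_mulVec_self_nonneg v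

theorem abs_dotProduct_gram_mulVec_sub_le_of_norm_le (hA : GramianIntegrable A) (hB : GramianIntegrable B)
    {γ : ℝ} (hgA : ‖gram A‖ ≤ γ) (hgB : ‖gram B‖ ≤ γ) (v : Fin n → ℝ) :
    |v ⬝ᵥ (gram A *ᵥ v) - v ⬝ᵥ (gram B *ᵥ v)| ≤ 2 * γ ^ 2 * ‖A - B‖ * (v ⬝ᵥ v) := by
  have hγ : 0 ≤ γ := (norm_nonneg _).trans hgA
  rw [← dotProduct_sub, ← sub_mulVec]
  calc _ ≤ 2 * ‖A - B‖ * ‖gram B‖ * (v ⬝ᵥ (gram A *ᵥ v)) :=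
        hA.abs_dotProduct_gram_sub_mulVec_le hB v
    _ ≤ 2 * ‖A - B‖ * γ * (γ * (v ⬝ᵥ v)) := by
        gcongr
        exacts [hA.dotProduct_gram_mulVec_self_nonneg v, dotProduct_mulVec_self_le_of_norm_le hgA v]
    _ = 2 * γ ^ 2 * ‖A - B‖ * (v ⬝ᵥ v) := by ring

end GramianIntegrable

end Gramian

section Comparison

variable {f g w : ℝ → ℝ} {a C : ℝ}

theorem continuousWithinAt_of_abs_sub_le {s : Set ℝ} (hg : ContinuousAt g a)
    (hw : ContinuousAt w a) (hfa : f a = g a) (hfg : ∀ z ∈ s, |f z - g z| ≤ C * |z - a| * w z) :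
    ContinuousWithinAt f s a := by
  have hbound : Tendsto (fun z => C * |z - a| * w z) (𝓝 a) (𝓝 0) := by
    have h : ContinuousAt (fun z => C * |z - a| * w z) a := by fun_prop
    simpa using h.tendsto
  have hdiff : Tendsto (fun z => f z - g z) (𝓝[s] a) (𝓝 0) :=
    squeeze_zero_norm' (eventually_nhdsWithin_of_forall hfg) (hbound.mono_left nhdsWithin_le_nhds)
  simpa [ContinuousWithinAt, hfa] using hg.continuousWithinAt.tendsto.add hdiff

theorem frequently_slope_lt_of_sub_le {d ρ : ℝ} (hg : HasDerivAt g d a) (hw : ContinuousAt w a)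
    (hfa : f a = g a) (hfg : ∀ᶠ z in 𝓝[>] a, f z - g z ≤ C * (z - a) * w z)
    (hρ : d + C * w a < ρ) : ∃ᶠ z in 𝓝[>] a, slope f a z < ρ := by
  have hslope : Tendsto (fun z => slope g a z + C * w z) (𝓝[>] a) (𝓝 (d + C * w a)) :=
    ((hasDerivAt_iff_tendsto_slope.1 hg).mono_left (nhdsWithin_mono a fun z hz => ne_of_gt hz)).add
      ((hw.const_mul C).mono_left nhdsWithin_le_nhds)
  refine Eventually.frequently ?_
  filter_upwards [hslope.eventually_lt_const hρ, hfg, self_mem_nhdsWithin] with z hlt hz haz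
  have hpos : 0 < z - a := sub_pos.2 haz
  calc slope f a z = (f z - g z) / (z - a) + slope g a z := by
        rw [slope_def_field, slope_def_field, hfa]; field_simp; ring
    _ ≤ C * w z + slope g a z := by
        gcongr; rw [div_le_iff₀ hpos]; linarith
    _ < ρ := by linarith

/-- `t ↦ q t t` need not be differentiable, but the hypotheses bound its right Dini derivative
at `s` by `-(1 - C) w s ≤ -k q s s`, which is all that Grönwall's inequality needs. -/
theorem le_mul_exp_of_frozen_hasDerivAt {q : ℝ → ℝ → ℝ} {k : ℝ}
    (hq : ∀ s, 0 ≤ s → HasDerivAt (q s) (-w s) s) (hw : ∀ s, 0 ≤ s → ContinuousAt w s)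
    (hfrozen : ∀ s z, 0 ≤ s → 0 ≤ z → |q z z - q s z| ≤ C * |z - s| * w z)
    (hk : ∀ s, 0 ≤ s → k * q s s ≤ (1 - C) * w s) {t : ℝ} (ht : 0 ≤ t) :
    q t t ≤ q 0 0 * Real.exp (-k * t) := by
  have h := le_gronwallBound_of_liminf_deriv_right_le (f := fun z => q z z)
    (f' := fun s => -w s + C * w s) (K := -k) (ε := 0)
    (fun s hs => continuousWithinAt_of_abs_sub_le (hq s hs.1).continuousAt (hw s hs.1) rfl
      fun z hz => hfrozen s z hs.1 hz.1)
    (fun s hs ρ hρ => frequently_slope_lt_of_sub_le (hq s hs.1) (hw s hs.1) rfl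
      (eventually_nhdsWithin_of_forall fun z (hz : s < z) => by
        have h := hfrozen s z hs.1 (hs.1.trans hz.le)
        rw [abs_of_pos (sub_pos.2 hz)] at h
        exact (le_abs_self _).trans h) hρ)
    le_rfl (fun s hs => by linarith [hk s hs.1]) t ⟨ht, le_rfl⟩
  simpa [gronwallBound_ε0] using h

end Comparison

theorem eucNorm_eq_sqrt_dotProduct {n : ℕ} (v : Fin n → ℝ) : eucNorm v = √(v ⬝ᵥ v) := by
  simp only [eucNorm, dotProduct, sq]

theorem eucNorm_le_of_dotProduct_le {n : ℕ} {u v : Fin n → ℝ} {c k t : ℝ} (hc : 0 ≤ c)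
    (h : u ⬝ᵥ u ≤ c * Real.exp (-k * t) * (v ⬝ᵥ v)) :
    eucNorm u ≤ √c * Real.exp (-(k / 2) * t) * eucNorm v := by
  have hexp : Real.exp (-(k / 2) * t) = √(Real.exp (-k * t)) := by
    rw [← Real.exp_half]; ring_nf
  rw [eucNorm_eq_sqrt_dotProduct, eucNorm_eq_sqrt_dotProduct, hexp, ← Real.sqrt_mul hc,
    ← Real.sqrt_mul (by positivity)]
  exact Real.sqrt_le_sqrt h

theorem dotProduct_gram_mulVec_le_mul_exp {n : ℕ} {M M' : ℝ → Matrix (Fin n) (Fin n) ℝ}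
    {x : ℝ → Fin n → ℝ} {γ r : ℝ}
    (hderiv : ∀ t, 0 ≤ t → ∀ i j, HasDerivAt (fun s => M s i j) (M' t i j) t)
    (hdot : ∀ t, 0 ≤ t → ‖M' t‖ ≤ r) (hP : ∀ t, 0 ≤ t → GramianIntegrable (M t))
    (hgram : ∀ t, 0 ≤ t → ‖gram (M t)‖ ≤ γ) (hγ : 0 < γ) (hC : 2 * γ ^ 2 * r ≤ 1)
    (hx : ∀ t, 0 ≤ t → HasDerivAt x (M t *ᵥ x t) t) {t : ℝ} (ht : 0 ≤ t) :
    x t ⬝ᵥ (gram (M t) *ᵥ x t) ≤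
      x 0 ⬝ᵥ (gram (M 0) *ᵥ x 0) * Real.exp (-((1 - 2 * γ ^ 2 * r) / γ) * t) := by
  refine le_mul_exp_of_frozen_hasDerivAt (q := fun s z => x z ⬝ᵥ (gram (M s) *ᵥ x z))
    (w := fun z => x z ⬝ᵥ x z) (C := 2 * γ ^ 2 * r)
    (fun s hs => (hP s hs).lyapunov (x s) ▸ hasDerivAt_dotProduct_mulVec_self (hx s hs) _)
    (fun s hs => ((hx s hs).dotProduct (hx s hs)).continuousAt) (fun s z hs hz => ?_)
    (fun s hs => ?_) ht
  · calc _ ≤ 2 * γ ^ 2 * ‖M z - M s‖ * (x z ⬝ᵥ x z) :=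
          (hP z hz).abs_dotProduct_gram_mulVec_sub_le_of_norm_le (hP s hs) (hgram z hz) (hgram s hs) (x z)
      _ ≤ 2 * γ ^ 2 * (r * |z - s|) * (x z ⬝ᵥ x z) := by
          gcongr
          · exact dotProduct_self_nonneg_real _
          · exact norm_sub_le_of_hasDerivAt_entries hderiv hdot hs hz
      _ = _ := by ring
  · calc _ ≤ (1 - 2 * γ ^ 2 * r) / γ * (γ * (x s ⬝ᵥ x s)) := by
          gcongr
          exact dotProduct_mulVec_self_le_of_norm_le (hgram s hs) _
      _ = _ := by rw [← mul_assoc, div_mul_cancel₀ _ hγ.ne']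

theorem ltv_GES_pointwise_slow_variation_general
    {n : ℕ} (M M' : ℝ → Matrix (Fin n) (Fin n) ℝ)
    (hderiv : ∀ t, 0 ≤ t → ∀ i j, HasDerivAt (fun s => M s i j) (M' t i j) t)
    (L : ℝ) (hL : ∀ t, 0 ≤ t → mnorm (M t) ≤ L)
    (γ₁ : ℝ) (hγ₁ : 0 < γ₁)
    (hint : ∀ t, 0 ≤ t → ∀ i j, IntegrableOn
        (fun τ => (mexp (τ • (M t)ᵀ) * mexp (τ • M t)) i j) (Set.Ici (0 : ℝ)))
    (hgram : ∀ t, 0 ≤ t → mnorm (gram (M t)) ≤ γ₁)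
    (r : ℝ) (hr : r < 1 / (2 * γ₁ ^ 2))
    (hdot : ∀ t, 0 ≤ t → mnorm (M' t) ≤ r) :
    ∃ c > 0, ∃ lam > 0, ∀ x : ℝ → Fin n → ℝ,
      (∀ t, 0 ≤ t → ∀ i, HasDerivAt (fun s => x s i) ((M t).mulVec (x t) i) t) →
      ∀ t, 0 ≤ t → eucNorm (x t) ≤ c * Real.exp (-lam * t) * eucNorm (x 0) := by
  have hC : 2 * γ₁ ^ 2 * r < 1 := by rwa [lt_div_iff₀ (by positivity), mul_comm] at hr
  have hL0 : 0 ≤ L := (norm_nonneg _).trans (hL 0 le_rfl)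
  have hP : ∀ t, 0 ≤ t → GramianIntegrable (M t) := hint
  set k := (1 - 2 * γ₁ ^ 2 * r) / γ₁
  refine ⟨√(2 * L * γ₁ + 1), by positivity, k / 2, div_pos (div_pos (by linarith) hγ₁) two_pos,
    fun x hx t ht => eucNorm_le_of_dotProduct_le (by positivity) ?_⟩
  have hx' : ∀ s, 0 ≤ s → HasDerivAt x (M s *ᵥ x s) s := fun s hs => hasDerivAt_pi.2 (hx s hs)
  have hdecay := dotProduct_gram_mulVec_le_mul_exp hderiv hdot hP hgram hγ₁ hC.le hx' ht
  calc x t ⬝ᵥ x t ≤ 2 * L * (x t ⬝ᵥ (gram (M t) *ᵥ x t)) :=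
        ((hP t ht).dotProduct_self_le _).trans
          (by gcongr; exacts [(hP t ht).dotProduct_gram_mulVec_self_nonneg _, hL t ht])
    _ ≤ 2 * L * (γ₁ * (x 0 ⬝ᵥ x 0) * Real.exp (-k * t)) := by
        gcongr
        exact hdecay.trans (by gcongr; exact dotProduct_mulVec_self_le_of_norm_le (hgram 0 le_rfl) _)
    _ ≤ (2 * L * γ₁ + 1) * Real.exp (-k * t) * (x 0 ⬝ᵥ x 0) := by
        nlinarith [dotProduct_self_nonneg_real (x 0), Real.exp_pos (-k * t)]

/-- **GES of a slowly time-varying linear system, pointwise bound on `Ṁ`.**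
`M : [0,∞) → ℝ^{n×n}` is continuously differentiable (derivative `M'`), `‖M(t)‖ ≤ L`,
`sup_{t≥0} s₁(M(t)) < 0` (encoded by `σ < 0` bounding the real parts of all eigenvalues),
`‖∫₀^∞ exp(M(t)ᵀτ)exp(M(t)τ)dτ‖ ≤ γ₁`, and `sup_{t≥0}‖Ṁ(t)‖ < 1/(2γ₁²)`.
Then the origin of `ẋ = M(t)x` is globally exponentially stable. -/
theorem ltv_GES_pointwise_slow_variation
    {n : ℕ} (M M' : ℝ → Matrix (Fin n) (Fin n) ℝ)
    (hderiv : ∀ t, 0 ≤ t → ∀ i j, HasDerivAt (fun s => M s i j) (M' t i j) t)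
    (hcont : ∀ i j, Continuous fun t => M' t i j)
    (L : ℝ) (hL : ∀ t, 0 ≤ t → mnorm (M t) ≤ L)
    (σ : ℝ) (hσ : σ < 0)
    (hspec : ∀ t, 0 ≤ t → ∀ μ ∈ spectrum ℂ ((M t).map Complex.ofReal), μ.re ≤ σ)
    (γ₁ : ℝ) (hγ₁ : 0 < γ₁)
    (hint : ∀ t, 0 ≤ t → ∀ i j, IntegrableOn
        (fun τ => (mexp (τ • (M t)ᵀ) * mexp (τ • M t)) i j) (Set.Ici (0 : ℝ)))
    (hgram : ∀ t, 0 ≤ t → mnorm (gram (M t)) ≤ γ₁)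
    (r : ℝ) (hr : r < 1 / (2 * γ₁ ^ 2))
    (hdot : ∀ t, 0 ≤ t → mnorm (M' t) ≤ r) :
    ∃ c > 0, ∃ lam > 0, ∀ x : ℝ → Fin n → ℝ,
      (∀ t, 0 ≤ t → ∀ i, HasDerivAt (fun s => x s i) ((M t).mulVec (x t) i) t) →
      ∀ t, 0 ≤ t → eucNorm (x t) ≤ c * Real.exp (-lam * t) * eucNorm (x 0) :=
  ltv_GES_pointwise_slow_variation_general M M' hderiv L hL γ₁ hγ₁ hint hgram r hr hdot
end

section
/- Let M ∈ ℝ^{n×n} be Hurwitz, i.e. every eigenvalue of M has negative real part. Then the integral Q = ∫₀^∞ exp(Mᵀτ) exp(Mτ) dτ converges, Q is a symmetric positive definite matrix, and Q satisfies the Lyapunov equation QM + MᵀQ = −I. -/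
open Matrix MeasureTheory

/-- A real square matrix is Hurwitz if all of its (complex) eigenvalues have
strictly negative real part. -/
def Hurwitz {n : ℕ} (M : Matrix (Fin n) (Fin n) ℝ) : Prop :=
  ∀ μ ∈ spectrum ℂ (M.map Complex.ofReal), μ.re < 0

namespace LyapunovProof

open NormedSpace Set Filter Topology

attribute [local instance] Matrix.linftyOpNormedAddCommGroup Matrix.linftyOpNormedRing
  Matrix.linftyOpNormedAlgebra

variable {n : ℕ}

lemma entry_le_norm (X : Matrix (Fin n) (Fin n) ℝ) (i j : Fin n) : ‖X i j‖ ≤ ‖X‖ := by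
  have h : ‖X i j‖₊ ≤ ‖X‖₊ := by
    rw [Matrix.linfty_opNNNorm_def]
    calc ‖X i j‖₊ ≤ ∑ k, ‖X i k‖₊ :=
          Finset.single_le_sum (f := fun k => ‖X i k‖₊) (fun k _ => zero_le) (Finset.mem_univ j)
      _ ≤ Finset.univ.sup fun i => ∑ k, ‖X i k‖₊ := Finset.le_sup (f := fun i => ∑ k, ‖X i k‖₊) (Finset.mem_univ i)
  exact_mod_cast h

/-- The entry projection as a continuous linear map. -/
noncomputable def entryCLM (i j : Fin n) : Matrix (Fin n) (Fin n) ℝ →L[ℝ] ℝ :=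
  LinearMap.mkContinuous
    { toFun := fun X => X i j
      map_add' := fun _ _ => rfl
      map_smul' := fun _ _ => rfl }
    1 (fun X => by rw [one_mul]; exact entry_le_norm X i j)

lemma bound_of_tendsto {E : Type*} [NormedAddCommGroup E] {g : ℝ → E}
    (hc : Continuous g) (h : Tendsto g atTop (𝓝 0)) :
    ∃ C : ℝ, 0 ≤ C ∧ ∀ t : ℝ, 0 ≤ t → ‖g t‖ ≤ C := by
  have h1 : ∀ᶠ t in atTop, ‖g t‖ ≤ 1 := by
    have h2 := h.norm
    rw [norm_zero] at h2
    exact h2.eventually (eventually_le_nhds one_pos)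
  obtain ⟨T, hT⟩ := eventually_atTop.mp h1
  obtain ⟨C, hC⟩ := (isCompact_Icc (a := (0:ℝ)) (b := max T 0)).exists_bound_of_continuousOn
    hc.continuousOn
  refine ⟨max C 1, le_trans zero_le_one (le_max_right _ _), fun t ht => ?_⟩
  rcases le_or_gt t (max T 0) with h' | h'
  · exact le_trans (hC t ⟨ht, h'⟩) (le_max_left _ _)
  · exact le_trans (hT t (le_trans (le_max_left _ _) h'.le)) (le_max_right _ _)

lemma exists_eps (A : Matrix (Fin n) (Fin n) ℂ) (hA : ∀ μ ∈ spectrum ℂ A, μ.re < 0) :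
    ∃ ε : ℝ, 0 < ε ∧ ∀ μ ∈ spectrum ℂ A, μ.re < -(2*ε) := by
  rcases (spectrum ℂ A).eq_empty_or_nonempty with h | h
  · exact ⟨1, one_pos, fun μ hμ => by rw [h] at hμ; exact absurd hμ (Set.notMem_empty μ)⟩
  · obtain ⟨μ₀, hμ₀, hmax⟩ := (spectrum.isCompact A).exists_isMaxOn h
      Complex.continuous_re.continuousOn
    have h0 := hA μ₀ hμ₀
    refine ⟨-μ₀.re/3, by linarith, fun μ hμ => ?_⟩
    have h2 : μ.re ≤ μ₀.re := hmax hμ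
    linarith

lemma pow_mul_exp_tendsto {c : ℝ} (hc : 0 < c) (m : ℕ) :
    Tendsto (fun t : ℝ => t^m * Real.exp (-(c*t))) atTop (𝓝 0) := by
  have h1 : Tendsto (fun t : ℝ => c * t) atTop atTop :=
    Tendsto.const_mul_atTop hc tendsto_id
  have h2 := (Real.tendsto_pow_mul_exp_neg_atTop_nhds_zero m).comp h1
  have h3 := h2.const_mul ((c^m)⁻¹)
  rw [mul_zero] at h3
  refine h3.congr fun t => ?_
  simp only [Function.comp_apply]
  rw [mul_pow]
  have hne : c^m ≠ 0 := pow_ne_zero _ (ne_of_gt hc)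
  field_simp

lemma vec_decay (A : Matrix (Fin n) (Fin n) ℂ) {ε : ℝ} (hε : 0 < ε)
    (hspec : ∀ μ ∈ spectrum ℂ A, μ.re < -(2*ε)) (v : Fin n → ℂ) :
    Tendsto (fun t : ℝ => Real.exp (ε*t) • (exp (t • A) *ᵥ v)) atTop (𝓝 0) := by
  have hv : v ∈ ⨆ μ : ℂ, Module.End.maxGenEigenspace (Matrix.toLinAlgEquiv' A) μ := by
    rw [Module.End.iSup_maxGenEigenspace_eq_top]; trivial
  refine Submodule.iSup_induction (motive := fun w => Tendsto
      (fun t : ℝ => Real.exp (ε*t) • (exp (t • A) *ᵥ w)) atTop (𝓝 0)) _ hv ?_ ?_ ?_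
  · -- generalized eigenvectors
    intro μ w hw
    rcases eq_or_ne w 0 with rfl | hw0
    · simpa [Matrix.mulVec_zero] using (tendsto_const_nhds :
        Tendsto (fun _ : ℝ => (0 : Fin n → ℂ)) atTop (𝓝 0))
    obtain ⟨k, hk⟩ := (Module.End.mem_maxGenEigenspace _ _ _).mp hw
    have hμA : μ ∈ spectrum ℂ A := by
      rw [← AlgEquiv.spectrum_eq (Matrix.toLinAlgEquiv' (R := ℂ) (n := Fin n)) A]
      have hgen : Module.End.HasGenEigenvalue (Matrix.toLinAlgEquiv' A) μ k := by
        rw [Module.End.hasGenEigenvalue_iff, Submodule.ne_bot_iff]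
        exact ⟨w, Module.End.mem_genEigenspace_nat.mpr hk, hw0⟩
      exact (Module.End.hasEigenvalue_of_hasGenEigenvalue hgen).mem_spectrum
    have hre : μ.re < -(2*ε) := hspec μ hμA
    set N : Matrix (Fin n) (Fin n) ℂ := A - μ • 1 with hN
    have hNk : N ^ k *ᵥ w = 0 := by
      have h1 : (Matrix.toLinAlgEquiv' (N ^ k)) w = 0 := by
        rw [map_pow, map_sub, _root_.map_smul, _root_.map_one]
        exact hk
      rwa [Matrix.toLinAlgEquiv'_apply] at h1
    have hNm : ∀ m : ℕ, m ∉ Finset.range k → N ^ m *ᵥ w = 0 := by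
      intro m hm
      rw [Finset.mem_range, not_lt] at hm
      rw [← Nat.sub_add_cancel hm, pow_add, ← Matrix.mulVec_mulVec, hNk, Matrix.mulVec_zero]
    have key : ∀ t : ℝ, exp (t • A) *ᵥ w = Complex.exp ((t:ℂ) * μ) •
        ∑ m ∈ Finset.range k, (((m.factorial : ℂ))⁻¹ * (t:ℂ)^m) • (N ^ m *ᵥ w) := by
      intro t
      have hsplit : t • A = ((t:ℂ) * μ) • (1 : Matrix (Fin n) (Fin n) ℂ) + t • N := by
        have h2 : ((t:ℂ) * μ) • (1 : Matrix (Fin n) (Fin n) ℂ) = t • (μ • 1) := by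
          rw [← smul_smul, ← Complex.coe_algebraMap, algebraMap_smul]
        rw [h2, ← smul_add, hN, add_sub_cancel]
      have hcomm : Commute (((t:ℂ) * μ) • (1 : Matrix (Fin n) (Fin n) ℂ)) (t • N) :=
        (Commute.one_left (t • N)).smul_left _
      rw [hsplit, Matrix.exp_add_of_commute _ _ hcomm]
      have h1 : exp (((t:ℂ)*μ) • (1 : Matrix (Fin n) (Fin n) ℂ))
          = Complex.exp ((t:ℂ)*μ) • 1 := by
        rw [← Algebra.algebraMap_eq_smul_one]
        have h' := map_exp (algebraMap ℂ (Matrix (Fin n) (Fin n) ℂ)) (continuous_algebraMap _ _)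
          ((t:ℂ)*μ)
        rw [← Complex.exp_eq_exp_ℂ, Algebra.algebraMap_eq_smul_one] at h'
        exact h'.symm
      rw [h1, smul_mul_assoc, one_mul, Matrix.smul_mulVec]
      congr 1
      -- exp(t•N) *ᵥ w is a finite sum
      classical
      let L0 : Matrix (Fin n) (Fin n) ℂ →ₗ[ℂ] (Fin n → ℂ) :=
        { toFun := fun X => X *ᵥ w
          map_add' := fun X Y => Matrix.add_mulVec X Y w
          map_smul' := fun c X => Matrix.smul_mulVec c X w }
      let L : Matrix (Fin n) (Fin n) ℂ →L[ℂ] (Fin n → ℂ) := LinearMap.toContinuousLinearMap L0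
      have hs : Summable fun m : ℕ => ((m.factorial : ℂ))⁻¹ • (t • N)^m :=
        expSeries_summable' (𝕂 := ℂ) (t • N)
      calc exp (t • N) *ᵥ w
          = L (exp (t • N)) := rfl
        _ = L (∑' m : ℕ, ((m.factorial:ℂ))⁻¹ • (t • N)^m) := by rw [exp_eq_tsum ℂ]
        _ = ∑' m : ℕ, L (((m.factorial:ℂ))⁻¹ • (t • N)^m) := L.map_tsum hs
        _ = ∑' m : ℕ, (((m.factorial:ℂ))⁻¹ * (t:ℂ)^m) • (N^m *ᵥ w) := by
            refine tsum_congr fun m => ?_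
            show (((m.factorial:ℂ))⁻¹ • (t • N)^m) *ᵥ w = _
            rw [smul_pow, Matrix.smul_mulVec, Matrix.smul_mulVec,
              ← algebraMap_smul ℂ (t^m) (N^m *ᵥ w), smul_smul]
            norm_num
        _ = ∑ m ∈ Finset.range k, (((m.factorial:ℂ))⁻¹ * (t:ℂ)^m) • (N^m *ᵥ w) :=
            tsum_eq_sum (fun m hm => by rw [hNm m hm, smul_zero])
    -- the scalar bound
    set c : ℝ := -(ε + μ.re) with hc'
    have hc : 0 < c := by simp only [hc']; linarith
    set a : ℕ → ℝ := fun m => ((m.factorial : ℝ))⁻¹ * ‖N ^ m *ᵥ w‖ with ha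
    have ha0 : ∀ m, 0 ≤ a m := fun m => mul_nonneg (by positivity) (norm_nonneg _)
    have hB : Tendsto (fun t : ℝ =>
        (∑ m ∈ Finset.range k, a m * t^m) * Real.exp (-(c*t))) atTop (𝓝 0) := by
      have heq : (fun t : ℝ => (∑ m ∈ Finset.range k, a m * t^m) * Real.exp (-(c*t)))
          = fun t : ℝ => ∑ m ∈ Finset.range k, a m * (t^m * Real.exp (-(c*t))) := by
        funext t
        rw [Finset.sum_mul]
        exact Finset.sum_congr rfl fun m _ => by ring
      rw [heq]
      have h0 : Tendsto (fun _ : ℝ => (0:ℝ)) atTop (𝓝 0) := tendsto_const_nhds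
      have := tendsto_finset_sum (Finset.range k)
        (fun m _ => ((pow_mul_exp_tendsto hc m).const_mul (a m)))
      simpa using this
    refine squeeze_zero_norm' ?_ hB
    filter_upwards [eventually_ge_atTop (0:ℝ)] with t ht
    rw [key t, norm_smul, norm_smul]
    have h1 : ‖Real.exp (ε*t)‖ = Real.exp (ε*t) := by
      rw [Real.norm_eq_abs, abs_of_pos (Real.exp_pos _)]
    have h2 : ‖Complex.exp ((t:ℂ) * μ)‖ = Real.exp (t * μ.re) := by
      rw [Complex.norm_exp, Complex.re_ofReal_mul]
    rw [h1, h2]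
    have h3 : ‖∑ m ∈ Finset.range k, (((m.factorial:ℂ))⁻¹ * (t:ℂ)^m) • (N^m *ᵥ w)‖
        ≤ ∑ m ∈ Finset.range k, a m * t^m := by
      refine le_trans (norm_sum_le _ _) (Finset.sum_le_sum fun m _ => ?_)
      rw [norm_smul, norm_mul, norm_inv, norm_pow]
      have : ‖(m.factorial : ℂ)‖ = (m.factorial : ℝ) := by
        simp [Complex.norm_natCast]
      rw [this]
      have : ‖(t:ℂ)‖ = t := by rw [Complex.norm_real, Real.norm_eq_abs, abs_of_nonneg ht]
      rw [this, ha]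
      ring_nf
      exact le_refl _
    calc Real.exp (ε*t) * (Real.exp (t * μ.re) *
          ‖∑ m ∈ Finset.range k, (((m.factorial:ℂ))⁻¹ * (t:ℂ)^m) • (N^m *ᵥ w)‖)
        ≤ Real.exp (ε*t) * (Real.exp (t * μ.re) * (∑ m ∈ Finset.range k, a m * t^m)) := by
          refine mul_le_mul_of_nonneg_left (mul_le_mul_of_nonneg_left h3 ?_) ?_ <;>
            positivity
      _ = (∑ m ∈ Finset.range k, a m * t^m) * Real.exp (-(c*t)) := by
          have h4 : Real.exp (ε*t) * Real.exp (t * μ.re) = Real.exp (-(c*t)) := by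
            rw [← Real.exp_add]
            congr 1
            rw [hc']; ring
          rw [← mul_assoc, h4, mul_comm]
  · simpa [Matrix.mulVec_zero] using (tendsto_const_nhds :
      Tendsto (fun _ : ℝ => (0 : Fin n → ℂ)) atTop (𝓝 0))
  · intro x y hx hy
    have h := hx.add hy
    rw [add_zero] at h
    refine h.congr fun t => ?_
    rw [Matrix.mulVec_add, smul_add]

lemma entry_decay (M : Matrix (Fin n) (Fin n) ℝ) (hM : Hurwitz M) :
    ∃ ε C : ℝ, 0 < ε ∧ 0 ≤ C ∧ ∀ t : ℝ, 0 ≤ t → ∀ i j,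
      |mexp (t • M) i j| ≤ C * Real.exp (-(ε * t)) := by
  classical
  set A : Matrix (Fin n) (Fin n) ℂ := M.map Complex.ofReal with hA
  obtain ⟨ε, hε, hspec⟩ := exists_eps A hM
  have hvec : ∀ v : Fin n → ℂ,
      Tendsto (fun t : ℝ => Real.exp (ε*t) • (exp (t • A) *ᵥ v)) atTop (𝓝 0) :=
    fun v => vec_decay A hε hspec v
  have hcont : ∀ v : Fin n → ℂ,
      Continuous (fun t : ℝ => Real.exp (ε*t) • (exp (t • A) *ᵥ v)) := by
    intro v
    refine Continuous.smul (Real.continuous_exp.comp (continuous_const.mul continuous_id)) ?_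
    exact Continuous.matrix_mulVec (exp_continuous.comp (continuous_id.smul continuous_const))
      continuous_const
  choose C hC0 hC using fun j : Fin n => bound_of_tendsto (hcont (Pi.single j 1))
    (hvec (Pi.single j 1))
  refine ⟨ε, ∑ j, C j, hε, Finset.sum_nonneg (fun j _ => hC0 j), fun t ht i j => ?_⟩
  have hmap : Matrix.map (mexp (t • M)) Complex.ofReal = exp (t • A) := by
    show Matrix.map (exp (t • M)) Complex.ofReal = exp (t • A)
    have hsm : (Complex.ofRealHom.mapMatrix : Matrix (Fin n) (Fin n) ℝ →+*
        Matrix (Fin n) (Fin n) ℂ) (t • M) = t • A := by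
      ext i j
      simp [hA, Matrix.map_apply, Complex.real_smul]
    have hcm : Continuous (Complex.ofRealHom.mapMatrix : Matrix (Fin n) (Fin n) ℝ →+*
        Matrix (Fin n) (Fin n) ℂ) := by
      show Continuous fun X : Matrix (Fin n) (Fin n) ℝ => X.map Complex.ofReal
      exact Continuous.matrix_map continuous_id Complex.continuous_ofReal
    have h1 := map_exp (Complex.ofRealHom.mapMatrix : Matrix (Fin n) (Fin n) ℝ →+*
        Matrix (Fin n) (Fin n) ℂ) hcm (t • M)
    rw [RingHom.mapMatrix_apply] at h1
    show (exp (t • M)).map ⇑Complex.ofRealHom = exp (t • A)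
    rw [hsm] at h1
    exact h1
  have hentry : ‖((mexp (t • M) i j : ℂ))‖ = ‖exp (t • A) i j‖ := by
    rw [← hmap]
    simp [Matrix.map_apply]
  have hsingle : exp (t • A) i j = (exp (t • A) *ᵥ Pi.single j 1) i := by
    simp [Matrix.mulVec_single]
  have h1 : Real.exp (ε*t) * ‖exp (t • A) *ᵥ Pi.single j 1‖ ≤ C j := by
    have h2 := hC j t ht
    rwa [norm_smul, Real.norm_eq_abs, abs_of_pos (Real.exp_pos _)] at h2
  have h3 : ‖exp (t • A) *ᵥ Pi.single j 1‖ ≤ C j * Real.exp (-(ε*t)) := by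
    have h4 := mul_le_mul_of_nonneg_right h1 (le_of_lt (Real.exp_pos (-(ε*t))))
    rw [mul_comm (Real.exp (ε*t)) _, mul_assoc, ← Real.exp_add] at h4
    simpa using h4
  calc |mexp (t • M) i j| = ‖((mexp (t • M) i j : ℂ))‖ := by
        rw [Complex.norm_real, Real.norm_eq_abs]
    _ = ‖exp (t • A) i j‖ := hentry
    _ = ‖(exp (t • A) *ᵥ Pi.single j 1) i‖ := by rw [← hsingle]
    _ ≤ ‖exp (t • A) *ᵥ Pi.single j 1‖ := norm_le_pi_norm _ i
    _ ≤ C j * Real.exp (-(ε*t)) := h3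
    _ ≤ (∑ j', C j') * Real.exp (-(ε*t)) := by
        refine mul_le_mul_of_nonneg_right ?_ (le_of_lt (Real.exp_pos _))
        exact Finset.single_le_sum (f := fun j => C j) (fun j _ => hC0 j) (Finset.mem_univ j)

lemma hurwitz_transpose (M : Matrix (Fin n) (Fin n) ℝ) (hM : Hurwitz M) : Hurwitz Mᵀ := by
  intro μ hμ
  apply hM μ
  rw [spectrum.mem_iff] at hμ ⊢
  intro h
  apply hμ
  have heq : algebraMap ℂ (Matrix (Fin n) (Fin n) ℂ) μ - Mᵀ.map Complex.ofReal
      = (algebraMap ℂ (Matrix (Fin n) (Fin n) ℂ) μ - M.map Complex.ofReal)ᵀ := by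
    rw [Matrix.transpose_sub, Matrix.transpose_map]
    congr 1
    rw [Algebra.algebraMap_eq_smul_one, Matrix.transpose_smul, Matrix.transpose_one]
  rw [heq, Matrix.isUnit_iff_isUnit_det, Matrix.det_transpose,
    ← Matrix.isUnit_iff_isUnit_det]
  exact h

end LyapunovProof

open NormedSpace Set Filter Topology LyapunovProof

attribute [local instance] Matrix.linftyOpNormedAddCommGroup Matrix.linftyOpNormedRing
  Matrix.linftyOpNormedAlgebra

/-- **Existence of the Lyapunov-equation solution for a Hurwitz matrix.**
If `M` is Hurwitz then `Q = ∫₀^∞ exp(Mᵀτ) exp(Mτ) dτ` converges (entrywise), is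
symmetric positive definite, and satisfies `QM + MᵀQ = −I`. -/
theorem gram_solves_lyapunov_equation
    {n : ℕ} (M : Matrix (Fin n) (Fin n) ℝ) (hM : Hurwitz M) :
    (∀ i j, IntegrableOn
        (fun τ => (mexp (τ • Mᵀ) * mexp (τ • M)) i j) (Set.Ici (0 : ℝ))) ∧
      (gram M).IsSymm ∧ (gram M).PosDef ∧
      gram M * M + Mᵀ * gram M = -(1 : Matrix (Fin n) (Fin n) ℝ) := by
  classical
  obtain ⟨ε₁, C₁, hε₁, hC₁0, hb₁⟩ := entry_decay M hM
  obtain ⟨ε₂, C₂, hε₂, hC₂0, hb₂⟩ := entry_decay Mᵀ (hurwitz_transpose M hM)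
  set g : ℝ → Matrix (Fin n) (Fin n) ℝ := fun t => mexp (t • Mᵀ) * mexp (t • M) with hg
  set α : ℝ := ε₂ + ε₁ with hα
  have hα0 : 0 < α := by rw [hα]; positivity
  set K : ℝ := (n : ℝ) * (C₂ * C₁) with hK
  have hgb : ∀ t : ℝ, 0 ≤ t → ∀ i j, |g t i j| ≤ K * Real.exp (-(α * t)) := by
    intro t ht i j
    show |(mexp (t • Mᵀ) * mexp (t • M)) i j| ≤ _
    rw [Matrix.mul_apply]
    calc |∑ k, mexp (t • Mᵀ) i k * mexp (t • M) k j|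
        ≤ ∑ k, |mexp (t • Mᵀ) i k * mexp (t • M) k j| := Finset.abs_sum_le_sum_abs _ _
      _ ≤ ∑ _k : Fin n, (C₂ * Real.exp (-(ε₂*t))) * (C₁ * Real.exp (-(ε₁*t))) := by
          refine Finset.sum_le_sum fun k _ => ?_
          rw [abs_mul]
          exact mul_le_mul (hb₂ t ht i k) (hb₁ t ht k j) (abs_nonneg _)
            (mul_nonneg hC₂0 (le_of_lt (Real.exp_pos _)))
      _ = K * Real.exp (-(α*t)) := by
          rw [Finset.sum_const, Finset.card_univ, Fintype.card_fin, nsmul_eq_mul]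
          have h5 : Real.exp (-(ε₂*t)) * Real.exp (-(ε₁*t)) = Real.exp (-(α*t)) := by
            rw [← Real.exp_add]; congr 1; rw [hα]; ring
          calc (n:ℝ) * ((C₂ * Real.exp (-(ε₂*t))) * (C₁ * Real.exp (-(ε₁*t))))
              = ((n:ℝ) * (C₂*C₁)) * (Real.exp (-(ε₂*t)) * Real.exp (-(ε₁*t))) := by ring
            _ = K * Real.exp (-(α*t)) := by rw [h5, hK]
  have hgc : Continuous g := by
    refine Continuous.matrix_mul ?_ ?_ <;>
      exact (exp_continuous (𝔸 := Matrix (Fin n) (Fin n) ℝ)).comp (continuous_id.smul continuous_const)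
  have hint : ∀ i j, IntegrableOn (fun t => g t i j) (Ici (0:ℝ)) := by
    intro i j
    have hmeas : AEStronglyMeasurable (fun t => g t i j) (volume.restrict (Ici (0:ℝ))) :=
      (hgc.matrix_elem i j).aestronglyMeasurable.restrict
    refine Integrable.mono' (g := fun t => K * Real.exp (-(α*t))) ?_ hmeas ?_
    · have h6 : IntegrableOn (fun t : ℝ => K * Real.exp (-α * t)) (Ici (0:ℝ)) := by
        rw [integrableOn_Ici_iff_integrableOn_Ioi]
        exact (exp_neg_integrableOn_Ioi 0 hα0).const_mul K
      refine h6.congr_fun (fun t _ => by simp only [neg_mul]) measurableSet_Ici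
    · filter_upwards [ae_restrict_mem measurableSet_Ici] with t ht
      rw [Real.norm_eq_abs]
      exact hgb t ht i j
  -- transpose facts
  have hT : ∀ t : ℝ, mexp (t • Mᵀ) = (mexp (t • M))ᵀ := by
    intro t
    show exp (t • Mᵀ) = (exp (t • M))ᵀ
    rw [← Matrix.exp_transpose, Matrix.transpose_smul]
  have hsym : ∀ t : ℝ, (g t)ᵀ = g t := by
    intro t
    show (mexp (t • Mᵀ) * mexp (t • M))ᵀ = mexp (t • Mᵀ) * mexp (t • M)
    rw [Matrix.transpose_mul, ← hT t, hT t, Matrix.transpose_transpose, ← hT t]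
  have hgramsymm : (gram M).IsSymm := by
    rw [Matrix.IsSymm]
    ext i j
    rw [Matrix.transpose_apply]
    show gram M j i = gram M i j
    have hji : ∀ τ : ℝ, g τ j i = g τ i j := by
      intro τ
      conv_lhs => rw [← hsym τ]
      rw [Matrix.transpose_apply]
    show (∫ τ in Ici (0:ℝ), g τ j i) = ∫ τ in Ici (0:ℝ), g τ i j
    simp_rw [hji]
  -- quadratic form
  have hIntvec : ∀ (x : Fin n → ℝ) (i : Fin n),
      IntegrableOn (fun τ => (g τ *ᵥ x) i) (Ici (0:ℝ)) := by
    intro x i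
    have h7 : (fun τ => (g τ *ᵥ x) i) = fun τ => ∑ j, g τ i j * x j := by
      funext τ; simp [Matrix.mulVec, dotProduct]
    rw [h7]
    exact integrable_finset_sum _ fun j _ => (hint i j).mul_const _
  have hstepA : ∀ (x : Fin n → ℝ) (i : Fin n),
      (gram M *ᵥ x) i = ∫ τ in Ici (0:ℝ), (g τ *ᵥ x) i := by
    intro x i
    calc (gram M *ᵥ x) i = ∑ j, gram M i j * x j := by
          simp [Matrix.mulVec, dotProduct]
      _ = ∑ j, ∫ τ in Ici (0:ℝ), g τ i j * x j := by
          refine Finset.sum_congr rfl fun j _ => ?_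
          have hq : gram M i j = ∫ τ in Ici (0:ℝ), g τ i j := rfl
          rw [hq]
          exact (integral_mul_const _ _).symm
      _ = ∫ τ in Ici (0:ℝ), ∑ j, g τ i j * x j :=
          (integral_finset_sum _ fun j _ => (hint i j).mul_const _).symm
      _ = ∫ τ in Ici (0:ℝ), (g τ *ᵥ x) i := by congr 1
  have hQform : ∀ x : Fin n → ℝ,
      x ⬝ᵥ (gram M *ᵥ x) = ∫ τ in Ici (0:ℝ), x ⬝ᵥ (g τ *ᵥ x) := by
    intro x
    calc x ⬝ᵥ (gram M *ᵥ x) = ∑ i, x i * (gram M *ᵥ x) i := by simp [dotProduct]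
      _ = ∑ i, ∫ τ in Ici (0:ℝ), x i * (g τ *ᵥ x) i := by
          refine Finset.sum_congr rfl fun i _ => ?_
          rw [hstepA]
          exact (integral_const_mul _ _).symm
      _ = ∫ τ in Ici (0:ℝ), ∑ i, x i * (g τ *ᵥ x) i :=
          (integral_finset_sum _ fun i _ => ((hIntvec x i).const_mul _)).symm
      _ = ∫ τ in Ici (0:ℝ), x ⬝ᵥ (g τ *ᵥ x) := by congr 1
  have hgq : ∀ (τ : ℝ) (x : Fin n → ℝ),
      x ⬝ᵥ (g τ *ᵥ x) = (mexp (τ • M) *ᵥ x) ⬝ᵥ (mexp (τ • M) *ᵥ x) := by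
    intro τ x
    show x ⬝ᵥ ((mexp (τ • Mᵀ) * mexp (τ • M)) *ᵥ x) = _
    rw [← Matrix.mulVec_mulVec, Matrix.dotProduct_mulVec]
    congr 1
    rw [hT τ, Matrix.vecMul_transpose]
  have hposdef : (gram M).PosDef := by
    refine Matrix.PosDef.of_dotProduct_mulVec_pos ?_ ?_
    · -- Hermitian
      show (gram M)ᴴ = gram M
      have : (gram M)ᴴ = (gram M)ᵀ := by
        ext i j
        simp [Matrix.conjTranspose_apply]
      rw [this]
      exact hgramsymm
    · intro x hx
      have hxs : star x = x := by
        funext i; simp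
      rw [hxs, hQform x]
      set φ : ℝ → ℝ := fun τ => x ⬝ᵥ (g τ *ᵥ x) with hφ
      have hφ0 : ∀ τ, 0 ≤ φ τ := by
        intro τ
        rw [hφ]
        show 0 ≤ x ⬝ᵥ (g τ *ᵥ x)
        rw [hgq]
        exact Finset.sum_nonneg fun i _ => mul_self_nonneg _
      have hφc : Continuous φ := by
        exact Continuous.dotProduct continuous_const
          (Continuous.matrix_mulVec hgc continuous_const)
      have hφpos : 0 < φ 0 := by
        show 0 < x ⬝ᵥ (g 0 *ᵥ x)
        rw [hgq]
        have h8 : mexp ((0:ℝ) • M) *ᵥ x = x := by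
          show exp ((0:ℝ) • M) *ᵥ x = x
          rw [zero_smul, exp_zero, Matrix.one_mulVec]
        rw [h8]
        have h9 : x ⬝ᵥ x ≠ 0 := fun hc => hx (dotProduct_self_eq_zero.mp hc)
        have h10 : 0 ≤ x ⬝ᵥ x := Finset.sum_nonneg fun i _ => mul_self_nonneg _
        exact lt_of_le_of_ne h10 (Ne.symm h9)
      have hφint : IntegrableOn φ (Ici (0:ℝ)) := by
        have h11 : φ = fun τ => ∑ i, x i * (g τ *ᵥ x) i := by
          funext τ; simp [hφ, dotProduct]
        rw [h11]
        exact integrable_finset_sum _ fun i _ => ((hIntvec x i).const_mul _)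
      rw [setIntegral_pos_iff_support_of_nonneg_ae
        (Filter.Eventually.of_forall hφ0) hφint]
      have h12 : ∀ᶠ τ in 𝓝 (0:ℝ), 0 < φ τ :=
        hφc.continuousAt.eventually (eventually_gt_nhds hφpos)
      obtain ⟨δ, hδ0, hδ⟩ := Metric.eventually_nhds_iff.mp h12
      have hsub : Ico (0:ℝ) δ ⊆ Function.support φ ∩ Ici (0:ℝ) := by
        intro τ hτ
        constructor
        · refine ne_of_gt (hδ ?_)
          rw [Real.dist_eq, sub_zero, abs_of_nonneg hτ.1]
          exact hτ.2
        · exact hτ.1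
      calc (0:ENNReal) < ENNReal.ofReal δ := by simpa using hδ0
        _ = volume (Ico (0:ℝ) δ) := by rw [Real.volume_Ico, sub_zero]
        _ ≤ volume (Function.support φ ∩ Ici (0:ℝ)) := measure_mono hsub
  -- derivative and FTC
  have hderiv : ∀ (i j : Fin n) (t : ℝ), HasDerivAt (fun s : ℝ => g s i j)
      ((Mᵀ * g t + g t * M) i j) t := by
    intro i j t
    have h1 : HasDerivAt (fun s : ℝ => exp (s • Mᵀ)) (Mᵀ * exp (t • Mᵀ)) t :=
      hasDerivAt_exp_smul_const' Mᵀ t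
    have h2 : HasDerivAt (fun s : ℝ => exp (s • M)) (exp (t • M) * M) t :=
      hasDerivAt_exp_smul_const M t
    have h3 := h1.mul h2
    have h4 := (entryCLM i j).hasFDerivAt.comp_hasDerivAt t h3
    have h5 : Mᵀ * exp (t • Mᵀ) * exp (t • M) + exp (t • Mᵀ) * (exp (t • M) * M)
        = Mᵀ * g t + g t * M := by
      show _ = Mᵀ * (mexp (t • Mᵀ) * mexp (t • M)) + (mexp (t • Mᵀ) * mexp (t • M)) * M
      show _ = Mᵀ * (exp (t • Mᵀ) * exp (t • M)) + (exp (t • Mᵀ) * exp (t • M)) * M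
      rw [mul_assoc Mᵀ, mul_assoc]
    rw [← h5]
    exact h4
  have htend : ∀ i j, Tendsto (fun t => g t i j) atTop (𝓝 (0:ℝ)) := by
    intro i j
    have h1 : Tendsto (fun t : ℝ => Real.exp (-(α*t))) atTop (𝓝 0) := by
      have h2 := pow_mul_exp_tendsto hα0 0
      simpa using h2
    have h3 : Tendsto (fun t : ℝ => K * Real.exp (-(α*t))) atTop (𝓝 (0:ℝ)) := by
      have h4 := h1.const_mul K
      simpa using h4
    refine squeeze_zero_norm' ?_ h3
    filter_upwards [eventually_ge_atTop (0:ℝ)] with t ht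
    rw [Real.norm_eq_abs]
    exact hgb t ht i j
  have hIntD : ∀ i j, IntegrableOn (fun t => (Mᵀ * g t + g t * M) i j) (Ioi (0:ℝ)) := by
    intro i j
    have heq : (fun t => (Mᵀ * g t + g t * M) i j)
        = fun t => (∑ k, Mᵀ i k * g t k j) + (∑ k, g t i k * M k j) := by
      funext t; simp [Matrix.add_apply, Matrix.mul_apply]
    rw [heq]
    refine Integrable.add ?_ ?_
    · exact integrable_finset_sum _ fun k _ =>
        ((hint k j).mono_set Ioi_subset_Ici_self).const_mul _
    · exact integrable_finset_sum _ fun k _ =>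
        ((hint i k).mono_set Ioi_subset_Ici_self).mul_const _
  have hFTC : ∀ i j, (∫ t in Ioi (0:ℝ), (Mᵀ * g t + g t * M) i j)
      = (-(1 : Matrix (Fin n) (Fin n) ℝ)) i j := by
    intro i j
    have h0 := integral_Ioi_of_hasDerivAt_of_tendsto' (f := fun t => g t i j)
      (f' := fun t => (Mᵀ * g t + g t * M) i j) (a := 0)
      (fun t _ => hderiv i j t) (hIntD i j) (htend i j)
    rw [h0]
    show (0:ℝ) - g 0 i j = (-(1 : Matrix (Fin n) (Fin n) ℝ)) i j
    have hg0 : g 0 = 1 := by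
      show mexp ((0:ℝ) • Mᵀ) * mexp ((0:ℝ) • M) = 1
      show exp ((0:ℝ) • Mᵀ) * exp ((0:ℝ) • M) = 1
      rw [zero_smul, zero_smul, exp_zero, one_mul]
    rw [hg0]
    simp [Matrix.neg_apply, Matrix.one_apply]
  refine ⟨hint, hgramsymm, hposdef, ?_⟩
  ext i j
  rw [Matrix.add_apply]
  have e1 : (gram M * M) i j = ∫ t in Ici (0:ℝ), ∑ k, g t i k * M k j := by
    rw [Matrix.mul_apply]
    calc ∑ k, gram M i k * M k j = ∑ k, ∫ t in Ici (0:ℝ), g t i k * M k j := by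
          refine Finset.sum_congr rfl fun k _ => ?_
          have hq : gram M i k = ∫ t in Ici (0:ℝ), g t i k := rfl
          rw [hq]
          exact (integral_mul_const _ _).symm
      _ = ∫ t in Ici (0:ℝ), ∑ k, g t i k * M k j :=
          (integral_finset_sum _ fun k _ => (hint i k).mul_const _).symm
  have e2 : (Mᵀ * gram M) i j = ∫ t in Ici (0:ℝ), ∑ k, Mᵀ i k * g t k j := by
    rw [Matrix.mul_apply]
    calc ∑ k, Mᵀ i k * gram M k j = ∑ k, ∫ t in Ici (0:ℝ), Mᵀ i k * g t k j := by
          refine Finset.sum_congr rfl fun k _ => ?_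
          have hq : gram M k j = ∫ t in Ici (0:ℝ), g t k j := rfl
          rw [hq]
          exact (integral_const_mul _ _).symm
      _ = ∫ t in Ici (0:ℝ), ∑ k, Mᵀ i k * g t k j :=
          (integral_finset_sum _ fun k _ => (hint k j).const_mul _).symm
  rw [e1, e2]
  have hintsum1 : IntegrableOn (fun t => ∑ k, g t i k * M k j) (Ici (0:ℝ)) :=
    integrable_finset_sum _ fun k _ => (hint i k).mul_const _
  have hintsum2 : IntegrableOn (fun t => ∑ k, Mᵀ i k * g t k j) (Ici (0:ℝ)) :=
    integrable_finset_sum _ fun k _ => (hint k j).const_mul _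
  rw [← integral_add hintsum1 hintsum2]
  have e3 : (∫ t in Ici (0:ℝ), ((∑ k, g t i k * M k j) + (∑ k, Mᵀ i k * g t k j)))
      = ∫ t in Ioi (0:ℝ), (Mᵀ * g t + g t * M) i j := by
    rw [integral_Ici_eq_integral_Ioi]
    congr 1
    funext t
    simp only [Matrix.add_apply, Matrix.mul_apply]
    ring
  rw [e3, hFTC i j]
end

section
/- Suppose A(t) = diag(A_1(t),…,A_q(t)) is block diagonal, where each block A_l(t) is symmetric with nonnegative entries and zero diagonal, piecewise continuous in t and bounded, the infection-rate matrix restricted to block l is B_l = β_l I with β_l ≥ 0, D_l is the corresponding diagonal block of D with nonnegative diagonal, and sup_{t≥0} λ₁(β_l A_l(t) − D_l) < 0 for every l = 1,…,q. Then the disease-free equilibrium of the time-varying n-intertwined SIS model is globally exponentially stable: there exist c, λ > 0 such that every solution with componentwise nonnegative initial condition satisfies ‖p(t)‖ ≤ c e^{−λt} ‖p(0)‖ for all t ≥ 0. -/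
set_option maxHeartbeats 1000000

open Matrix Set Filter Topology

/-- Rayleigh quotient bound: for a real symmetric matrix, the quadratic form is bounded by
the largest eigenvalue times the squared norm. -/
lemma sis_aux_rayleigh {ι : Type*} [Fintype ι] [DecidableEq ι] [Nonempty ι]
    (M : Matrix ι ι ℝ) (hM : M.IsHermitian) (x : ι → ℝ) :
    x ⬝ᵥ (M *ᵥ x) ≤ (⨆ i, hM.eigenvalues i) * (x ⬝ᵥ x) := by
  set μ := ⨆ i, hM.eigenvalues i with hμdef
  have hμ : ∀ i, hM.eigenvalues i ≤ μ :=
    fun i => le_ciSup (Set.finite_range _).bddAbove i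
  have hpsd : (Matrix.diagonal (fun i => μ - hM.eigenvalues i)).PosSemidef :=
    Matrix.PosSemidef.diagonal (fun i => sub_nonneg.2 (hμ i))
  have h2 : (μ • (1 : Matrix ι ι ℝ) - M).PosSemidef := by
    have h3 := hpsd.mul_mul_conjTranspose_same (hM.eigenvectorUnitary : Matrix ι ι ℝ)
    convert h3 using 1
    have hU : (hM.eigenvectorUnitary : Matrix ι ι ℝ) * (hM.eigenvectorUnitary : Matrix ι ι ℝ)ᴴ = 1 :=
      Matrix.mem_unitaryGroup_iff.mp hM.eigenvectorUnitary.2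
    have hd : Matrix.diagonal (fun i => μ - hM.eigenvalues i)
        = μ • (1 : Matrix ι ι ℝ) - Matrix.diagonal hM.eigenvalues := by
      rw [Matrix.smul_one_eq_diagonal, Matrix.diagonal_sub]
    rw [hd, Matrix.mul_sub, Matrix.sub_mul]
    congr 1
    · rw [mul_smul_comm, Matrix.mul_one, smul_mul_assoc, hU]
    · conv_lhs => rw [hM.spectral_theorem]
      simp [Matrix.star_eq_conjTranspose, Function.comp]
  have h4 := h2.dotProduct_mulVec_nonneg x
  simp only [star_trivial, Matrix.sub_mulVec, Matrix.smul_mulVec, Matrix.one_mulVec,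
    dotProduct_sub, dotProduct_smul, smul_eq_mul] at h4
  linarith

/-- Nonnegativity is forward invariant for the time-varying n-intertwined SIS model. -/
lemma sis_aux_nonneg {n q : ℕ} (blk : Fin n → Fin q)
    (β : Fin q → ℝ) (hβ : ∀ l, 0 ≤ β l)
    (δ : Fin n → ℝ) (hδ : ∀ i, 0 ≤ δ i)
    (A : ℝ → Matrix (Fin n) (Fin n) ℝ)
    (hnn : ∀ t, 0 ≤ t → ∀ i j, 0 ≤ A t i j)
    (hbdd : ∃ C, ∀ t, 0 ≤ t → ∀ i j, |A t i j| ≤ C)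
    (p : ℝ → Fin n → ℝ)
    (hp : ∀ t, 0 ≤ t → ∀ i, HasDerivAt (fun s => p s i)
        ((1 - p t i) * β (blk i) * (∑ j, A t i j * p t j) - δ i * p t i) t)
    (h0 : ∀ i, 0 ≤ p 0 i) :
    ∀ t, 0 ≤ t → ∀ i, 0 ≤ p t i := by
  obtain ⟨C₀, hC₀⟩ := hbdd
  set C := max C₀ 0 with hCdef
  have hC : ∀ t, 0 ≤ t → ∀ i j, A t i j ≤ C := fun t ht i j =>
    (le_abs_self _).trans ((hC₀ t ht i j).trans (le_max_left _ _))
  have hC0 : (0:ℝ) ≤ C := le_max_right _ _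
  set B := ∑ l, β l with hBdef
  have hB : ∀ l, β l ≤ B := fun l => Finset.single_le_sum (fun l _ => hβ l) (Finset.mem_univ l)
  have hB0 : (0:ℝ) ≤ B := Finset.sum_nonneg fun l _ => hβ l
  set K := 2 * B * n * C + 1 with hKdef
  have hK0 : (0:ℝ) < K := by positivity
  intro t₀ ht₀ i₀
  have claim : ∀ ε, 0 < ε → ε * Real.exp (K * t₀) ≤ 1 →
      ∀ t ∈ Set.Icc 0 t₀, ∀ i, 0 < p t i + ε * Real.exp (K * t) := by
    intro ε hε hε1
    set g : Fin n → ℝ → ℝ := fun i t => p t i + ε * Real.exp (K * t) with hgdef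
    by_contra hcon
    push_neg at hcon
    obtain ⟨t₁, ht₁, i₁, hi₁⟩ := hcon
    have hexpc : Continuous fun s : ℝ => ε * Real.exp (K * s) := by fun_prop
    have hgcAt : ∀ j, ∀ s, 0 ≤ s → ContinuousAt (g j) s := fun j s hs =>
      ((hp s hs j).continuousAt).add hexpc.continuousAt
    set S := ⋃ j : Fin n, (Set.Icc 0 t₀ ∩ (g j) ⁻¹' Set.Iic 0) with hSdef
    have hgco : ∀ j, ContinuousOn (g j) (Set.Icc 0 t₀) :=
      fun j s hs => (hgcAt j s hs.1).continuousWithinAt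
    have hSclosed : IsClosed S :=
      isClosed_iUnion_of_finite fun j =>
        (hgco j).preimage_isClosed_of_isClosed isClosed_Icc isClosed_Iic
    have hSne : S.Nonempty := ⟨t₁, Set.mem_iUnion.2 ⟨i₁, ⟨ht₁, hi₁⟩⟩⟩
    have hSbdd : BddBelow S := ⟨0, fun s hs => by
      obtain ⟨j, hj⟩ := Set.mem_iUnion.1 hs; exact hj.1.1⟩
    set t' := sInf S with ht'def
    have ht'S : t' ∈ S := hSclosed.csInf_mem hSne hSbdd
    obtain ⟨i, hi⟩ := Set.mem_iUnion.1 ht'S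
    have ht'Icc : t' ∈ Set.Icc 0 t₀ := hi.1
    have hgt' : g i t' ≤ 0 := hi.2
    have ht'pos : 0 < t' := by
      rcases lt_or_eq_of_le ht'Icc.1 with h | h
      · exact h
      · exfalso
        have h1 : (0:ℝ) < g i 0 := by
          have hexp : (0:ℝ) < ε * Real.exp (K * 0) := by positivity
          simp only [hgdef]
          linarith [h0 i]
        rw [← h] at hgt'
        linarith
    have hbefore : ∀ s, s ∈ Set.Ico 0 t' → ∀ j, 0 < g j s := by
      intro s hs j
      by_contra hle
      push_neg at hle
      have : s ∈ S := Set.mem_iUnion.2 ⟨j, ⟨⟨hs.1, hs.2.le.trans ht'Icc.2⟩, hle⟩⟩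
      exact absurd (csInf_le hSbdd this) (not_le.2 hs.2)
    have hok : ∀ j, 0 ≤ g j t' := by
      intro j
      have htd : Filter.Tendsto (g j) (𝓝[<] t') (𝓝 (g j t')) :=
        ((hgcAt j t' ht'Icc.1).tendsto).mono_left nhdsWithin_le_nhds
      refine ge_of_tendsto htd ?_
      filter_upwards [Ioo_mem_nhdsLT_of_mem (show t' ∈ Set.Ioc 0 t' from ⟨ht'pos, le_rfl⟩)]
        with s hs using (hbefore s ⟨hs.1.le, hs.2⟩ j).le
    have hgeq : g i t' = 0 := le_antisymm hgt' (hok i)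
    set E := Real.exp (K * t') with hEdef
    have hE0 : 0 < E := Real.exp_pos _
    have hpE : p t' i = -(ε * E) := by
      have : p t' i + ε * E = 0 := hgeq
      linarith
    have hεE1 : ε * E ≤ 1 := by
      have : E ≤ Real.exp (K * t₀) :=
        Real.exp_le_exp.2 (mul_le_mul_of_nonneg_left ht'Icc.2 hK0.le)
      nlinarith
    have hεE0 : 0 < ε * E := by positivity
    have hlow : ∀ j, -(ε * E) ≤ p t' j := fun j => by
      have := hok j; simp only [hgdef] at this; linarith
    set d := (1 - p t' i) * β (blk i) * (∑ j, A t' i j * p t' j) - δ i * p t' i with hddef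
    have hsum : -((n : ℝ) * C * (ε * E)) ≤ ∑ j, A t' i j * p t' j := by
      have : ∀ j ∈ Finset.univ, -(C * (ε * E)) ≤ A t' i j * p t' j := by
        intro j _
        have h1 : A t' i j * (-(ε * E)) ≤ A t' i j * p t' j :=
          mul_le_mul_of_nonneg_left (hlow j) (hnn t' ht'Icc.1 i j)
        have h2 : -(C * (ε * E)) ≤ A t' i j * (-(ε * E)) := by
          have := hC t' ht'Icc.1 i j
          nlinarith
        linarith
      calc -((n : ℝ) * C * (ε * E)) = ∑ _j : Fin n, -(C * (ε * E)) := by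
            simp [Finset.sum_const]; ring
        _ ≤ _ := Finset.sum_le_sum this
    have hd_lb : -(2 * B * n * C * (ε * E)) ≤ d := by
      have hβi := hβ (blk i)
      have hβB := hB (blk i)
      have h1p : 1 - p t' i = 1 + ε * E := by rw [hpE]; ring
      have h1p2 : 1 + ε * E ≤ 2 := by linarith
      have h1p0 : 0 < 1 + ε * E := by linarith
      have hterm : -(2 * B * n * C * (ε * E))
          ≤ (1 - p t' i) * β (blk i) * (∑ j, A t' i j * p t' j) := by
        rw [h1p]
        have hmono : ((1 + ε * E) * β (blk i)) * (-((n : ℝ) * C * (ε * E)))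
            ≤ ((1 + ε * E) * β (blk i)) * (∑ j, A t' i j * p t' j) :=
          mul_le_mul_of_nonneg_left hsum (by positivity)
        have hfac : (1 + ε * E) * β (blk i) ≤ 2 * B := by nlinarith
        have hprod := mul_le_mul_of_nonneg_right hfac
          (show (0:ℝ) ≤ (n : ℝ) * C * (ε * E) by positivity)
        have : -(2 * B * n * C * (ε * E))
            ≤ ((1 + ε * E) * β (blk i)) * (-((n : ℝ) * C * (ε * E))) := by
          nlinarith [hprod]
        calc -(2 * B * n * C * (ε * E)) ≤ _ := this
          _ ≤ _ := hmono
      have hdel : 0 ≤ -(δ i * p t' i) := by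
        rw [hpE]; have := hδ i; nlinarith
      simp only [hddef]
      linarith
    have hD : 0 < d + ε * (K * E) := by
      have : d + ε * (K * E) ≥ -(2 * B * n * C * (ε * E)) + (ε * E) * K := by
        have : ε * (K * E) = (ε * E) * K := by ring
        linarith [hd_lb]
      have hKK : (ε * E) * K - 2 * B * n * C * (ε * E) = ε * E := by
        rw [hKdef]; ring
      linarith
    have hg' : HasDerivAt (g i) (d + ε * (K * E)) t' := by
      have h1 : HasDerivAt (fun s => p s i) d t' := hp t' ht'Icc.1 i
      have h2 : HasDerivAt (fun s : ℝ => ε * Real.exp (K * s)) (ε * (K * E)) t' := by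
        have h3 : HasDerivAt (fun s : ℝ => K * s) K t' := by
          simpa using (hasDerivAt_id t').const_mul K
        have h4 := (Real.hasDerivAt_exp (K * t')).comp t' h3
        have h5 := h4.const_mul ε
        simpa [hEdef, mul_comm] using h5
      exact h1.add h2
    have hslope := hasDerivAt_iff_tendsto_slope.1 hg'
    have hev : ∀ᶠ s in 𝓝[≠] t', 0 < slope (g i) t' s :=
      hslope.eventually (eventually_gt_nhds hD)
    have hev2 : ∀ᶠ s in 𝓝[<] t', 0 < slope (g i) t' s :=
      hev.filter_mono (nhdsWithin_mono t' fun s hs => ne_of_lt hs)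
    have hev3 : ∀ᶠ s in 𝓝[<] t', s ∈ Set.Ioo 0 t' :=
      Ioo_mem_nhdsLT_of_mem ⟨ht'pos, le_rfl⟩
    obtain ⟨s, hs1, hs2⟩ := (hev2.and hev3).exists
    have hslt : s < t' := hs2.2
    have : slope (g i) t' s = (g i s) / (s - t') := by
      rw [slope_def_field, hgeq]; ring_nf
    rw [this] at hs1
    have hgs : 0 < g i s := hbefore s ⟨hs2.1.le, hs2.2⟩ i
    have hneg : g i s / (s - t') < 0 := div_neg_of_pos_of_neg hgs (by linarith)
    linarith
  by_contra hneg
  push_neg at hneg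
  set ε := min (Real.exp (-(K * t₀))) ((-p t₀ i₀) * Real.exp (-(K * t₀))) with hεdef
  have hε0 : 0 < ε := lt_min (Real.exp_pos _) (mul_pos (by linarith) (Real.exp_pos _))
  have hε1 : ε * Real.exp (K * t₀) ≤ 1 := by
    have h1 : ε ≤ Real.exp (-(K * t₀)) := min_le_left _ _
    have h2 : (0:ℝ) < Real.exp (K * t₀) := Real.exp_pos _
    calc ε * Real.exp (K * t₀) ≤ Real.exp (-(K * t₀)) * Real.exp (K * t₀) :=
          mul_le_mul_of_nonneg_right h1 h2.le
      _ = 1 := by rw [← Real.exp_add]; simp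
  have := claim ε hε0 hε1 t₀ ⟨ht₀, le_rfl⟩ i₀
  have h2 : ε * Real.exp (K * t₀) ≤ -p t₀ i₀ := by
    have h1 : ε ≤ (-p t₀ i₀) * Real.exp (-(K * t₀)) := min_le_right _ _
    have h3 : (0:ℝ) < Real.exp (K * t₀) := Real.exp_pos _
    calc ε * Real.exp (K * t₀) ≤ ((-p t₀ i₀) * Real.exp (-(K * t₀))) * Real.exp (K * t₀) :=
          mul_le_mul_of_nonneg_right h1 h3.le
      _ = -p t₀ i₀ := by rw [mul_assoc, ← Real.exp_add]; simp
  linarith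

/-- **Quarantine (block-diagonal) stability of the DFE.**
The agents are partitioned into `q` blocks by `blk : Fin n → Fin q`; `A(t)` is block
diagonal (no edges between distinct blocks), each block is symmetric with nonnegative
entries and zero diagonal and bounded, block `l` has homogeneous infection rate
`β l ≥ 0`, and `sup_{t≥0} λ₁(β_l A_l(t) − D_l) < 0` for every block `l` (encoded:
`lam l < 0` bounds the largest eigenvalue of the block submatrix for every `t ≥ 0`).
Then the DFE of the time-varying n-intertwined SIS model is globally exponentially
stable. -/
theorem sis_quarantine_block_diagonal_GES
    {n q : ℕ} (blk : Fin n → Fin q)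
    (β : Fin q → ℝ) (hβ : ∀ l, 0 ≤ β l)
    (δ : Fin n → ℝ) (hδ : ∀ i, 0 ≤ δ i)
    (A : ℝ → Matrix (Fin n) (Fin n) ℝ)
    (hblock : ∀ t, 0 ≤ t → ∀ i j, blk i ≠ blk j → A t i j = 0)
    (hsym : ∀ t, 0 ≤ t → (A t).IsSymm)
    (hnn : ∀ t, 0 ≤ t → ∀ i j, 0 ≤ A t i j)
    (hdiag : ∀ t, 0 ≤ t → ∀ i, A t i i = 0)
    (hbdd : ∃ C, ∀ t, 0 ≤ t → ∀ i j, |A t i j| ≤ C)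
    (lam : Fin q → ℝ) (hlam : ∀ l, lam l < 0)
    (hsup : ∀ (l : Fin q) (t : ℝ), 0 ≤ t →
      ∀ h : (β l • (A t).submatrix (Subtype.val : {i // blk i = l} → Fin n) Subtype.val
          - Matrix.diagonal fun i : {i // blk i = l} => δ i.1).IsHermitian,
        (⨆ i, h.eigenvalues i) ≤ lam l) :
    ∃ c > 0, ∃ lam' > 0, ∀ p : ℝ → Fin n → ℝ,
      (∀ t, 0 ≤ t → ∀ i, HasDerivAt (fun s => p s i)
        ((1 - p t i) * β (blk i) * (∑ j, A t i j * p t j) - δ i * p t i) t) →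
      (∀ i, 0 ≤ p 0 i) →
      ∀ t, 0 ≤ t → eucNorm (p t) ≤ c * Real.exp (-lam' * t) * eucNorm (p 0) := by
  classical
  -- the matrix in `hsup` is Hermitian
  have hHerm : ∀ (l : Fin q) (t : ℝ), 0 ≤ t →
      (β l • (A t).submatrix (Subtype.val : {i // blk i = l} → Fin n) Subtype.val
        - Matrix.diagonal fun i : {i // blk i = l} => δ i.1).IsHermitian := by
    intro l t ht
    have h1 : ((A t).submatrix (Subtype.val : {i // blk i = l} → Fin n) Subtype.val).IsHermitian := by
      have hA : (A t).IsHermitian := by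
        rw [Matrix.IsHermitian, Matrix.conjTranspose_eq_transpose_of_trivial, hsym t ht]
      exact hA.submatrix _
    have h2 : (β l • (A t).submatrix (Subtype.val : {i // blk i = l} → Fin n) Subtype.val).IsHermitian := by
      rw [Matrix.IsHermitian, Matrix.conjTranspose_smul, h1]
      simp
    exact h2.sub (Matrix.isHermitian_diagonal _)
  -- trivial case: no agents
  rcases Nat.eq_zero_or_pos n with hn | hn
  · refine ⟨1, one_pos, 1, one_pos, fun p _ _ t ht => ?_⟩
    subst hn
    simp only [eucNorm, Finset.univ_eq_empty, Finset.sum_empty, Real.sqrt_zero, mul_zero]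
    positivity
  -- every block is nonempty (otherwise `hsup` is contradictory)
  have hfiber : ∀ l, Nonempty {i // blk i = l} := by
    intro l
    by_contra h
    haveI := not_nonempty_iff.1 h
    have h' := hsup l 0 le_rfl (hHerm l 0 le_rfl)
    rw [Real.iSup_of_isEmpty] at h'
    exact absurd (h'.trans_lt (hlam l)) (lt_irrefl 0).elim
  haveI : Nonempty (Fin q) := ⟨blk ⟨0, hn⟩⟩
  set Λ := Finset.univ.sup' Finset.univ_nonempty lam with hΛdef
  have hΛlt : Λ < 0 := (Finset.sup'_lt_iff _).2 fun l _ => hlam l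
  have hΛub : ∀ l, lam l ≤ Λ := fun l => Finset.le_sup' lam (Finset.mem_univ l)
  refine ⟨1, one_pos, -Λ, by linarith, ?_⟩
  intro p hp h0 t₀ ht₀
  have hpos : ∀ t, 0 ≤ t → ∀ i, 0 ≤ p t i :=
    sis_aux_nonneg blk β hβ δ hδ A hnn hbdd p hp h0
  set V : ℝ → ℝ := fun t => ∑ i, p t i ^ 2 with hVdef
  set V' : ℝ → ℝ := fun t => ∑ i, 2 * p t i ^ 1 *
    ((1 - p t i) * β (blk i) * (∑ j, A t i j * p t j) - δ i * p t i) with hV'def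
  have hVd : ∀ t, 0 ≤ t → HasDerivAt V (V' t) t := by
    intro t ht
    exact HasDerivAt.fun_sum fun i _ => ((hp t ht i).pow 2).congr_deriv (by norm_num)
  -- the key differential inequality
  have hbound : ∀ t, 0 ≤ t → V' t ≤ 2 * Λ * V t := by
    intro t ht
    have hP : ∀ i, 0 ≤ p t i := hpos t ht
    have hsum0 : ∀ i, 0 ≤ ∑ j, A t i j * p t j := fun i =>
      Finset.sum_nonneg fun j _ => mul_nonneg (hnn t ht i j) (hP j)
    have step1 : V' t ≤ 2 * ∑ i, (β (blk i) * p t i * (∑ j, A t i j * p t j)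
        - δ i * p t i ^ 2) := by
      rw [Finset.mul_sum]
      refine Finset.sum_le_sum fun i _ => ?_
      have key : 0 ≤ β (blk i) * p t i ^ 2 * (∑ j, A t i j * p t j) :=
        mul_nonneg (mul_nonneg (hβ (blk i)) (sq_nonneg _)) (hsum0 i)
      nlinarith [key]
    have hinner : ∀ (l : Fin q) (i : Fin n), blk i = l →
        ∑ j : {j // blk j = l}, A t i j.1 * p t j.1 = ∑ j, A t i j * p t j := by
      intro l i hi
      rw [← Fintype.sum_fiberwise blk (fun j => A t i j * p t j)]
      symm
      refine Finset.sum_eq_single l (fun m _ hm => Finset.sum_eq_zero fun j _ => ?_)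
        (fun h => absurd (Finset.mem_univ l) h)
      rw [hblock t ht i j.1 (by rw [hi, j.2]; exact hm.symm), zero_mul]
    have step2 : ∑ i, (β (blk i) * p t i * (∑ j, A t i j * p t j) - δ i * p t i ^ 2)
        = ∑ l, ((fun i : {i // blk i = l} => p t i.1) ⬝ᵥ
            ((β l • (A t).submatrix (Subtype.val : {i // blk i = l} → Fin n) Subtype.val
              - Matrix.diagonal fun i : {i // blk i = l} => δ i.1) *ᵥ
              (fun i : {i // blk i = l} => p t i.1))) := by
      rw [← Fintype.sum_fiberwise blk
        (fun i => β (blk i) * p t i * (∑ j, A t i j * p t j) - δ i * p t i ^ 2)]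
      refine Finset.sum_congr rfl fun l _ => ?_
      simp only [dotProduct, Matrix.sub_mulVec, Matrix.smul_mulVec,
        Pi.sub_apply, Pi.smul_apply, smul_eq_mul, Matrix.mulVec_diagonal]
      refine Finset.sum_congr rfl fun i _ => ?_
      rw [show (Matrix.mulVec ((A t).submatrix (Subtype.val : {i // blk i = l} → Fin n)
          Subtype.val) (fun i : {i // blk i = l} => p t i.1)) i
          = ∑ j : {j // blk j = l}, A t i.1 j.1 * p t j.1 from rfl]
      rw [hinner l i.1 i.2, i.2]
      ring
    have step3 : ∀ l : Fin q, ((fun i : {i // blk i = l} => p t i.1) ⬝ᵥ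
        ((β l • (A t).submatrix (Subtype.val : {i // blk i = l} → Fin n) Subtype.val
          - Matrix.diagonal fun i : {i // blk i = l} => δ i.1) *ᵥ
          (fun i : {i // blk i = l} => p t i.1)))
        ≤ Λ * ((fun i : {i // blk i = l} => p t i.1) ⬝ᵥ (fun i : {i // blk i = l} => p t i.1)) := by
      intro l
      haveI := hfiber l
      have hray := sis_aux_rayleigh _ (hHerm l t ht) (fun i : {i // blk i = l} => p t i.1)
      have hxx : (0:ℝ) ≤ (fun i : {i // blk i = l} => p t i.1) ⬝ᵥ
          (fun i : {i // blk i = l} => p t i.1) :=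
        Finset.sum_nonneg fun i _ => mul_self_nonneg _
      have hlamΛ : (⨆ i, (hHerm l t ht).eigenvalues i) ≤ Λ :=
        (hsup l t ht (hHerm l t ht)).trans (hΛub l)
      exact hray.trans (mul_le_mul_of_nonneg_right hlamΛ hxx)
    have step4 : ∑ l, ((fun i : {i // blk i = l} => p t i.1) ⬝ᵥ
        (fun i : {i // blk i = l} => p t i.1)) = V t := by
      have hVt : V t = ∑ i, p t i ^ 2 := rfl
      rw [hVt, ← Fintype.sum_fiberwise blk (fun i => p t i ^ 2)]
      exact Finset.sum_congr rfl fun l _ => by simp [dotProduct, sq]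
    calc V' t ≤ 2 * ∑ i, (β (blk i) * p t i * (∑ j, A t i j * p t j) - δ i * p t i ^ 2) := step1
      _ = 2 * ∑ l, ((fun i : {i // blk i = l} => p t i.1) ⬝ᵥ
            ((β l • (A t).submatrix (Subtype.val : {i // blk i = l} → Fin n) Subtype.val
              - Matrix.diagonal fun i : {i // blk i = l} => δ i.1) *ᵥ
              (fun i : {i // blk i = l} => p t i.1))) := by rw [step2]
      _ ≤ 2 * ∑ l, Λ * ((fun i : {i // blk i = l} => p t i.1) ⬝ᵥ
            (fun i : {i // blk i = l} => p t i.1)) := by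
          have := Finset.sum_le_sum fun l (_ : l ∈ Finset.univ) => step3 l
          linarith
      _ = 2 * Λ * V t := by rw [← Finset.mul_sum, step4]; ring
  -- Grönwall
  have hVc : ContinuousOn V (Set.Icc 0 t₀) :=
    fun s hs => ((hVd s hs.1).continuousAt).continuousWithinAt
  have hgron := le_gronwallBound_of_liminf_deriv_right_le (f := V) (f' := V')
    (δ := V 0) (K := 2 * Λ) (ε := 0) (a := 0) (b := t₀) hVc
    (fun x hx r hr => ((hVd x hx.1).hasDerivWithinAt).liminf_right_slope_le hr)
    le_rfl
    (fun x hx => by rw [add_zero]; exact hbound x hx.1)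
  have hVt := hgron t₀ ⟨ht₀, le_rfl⟩
  rw [sub_zero, gronwallBound_ε0] at hVt
  -- conclude
  have hV0 : 0 ≤ V 0 := Finset.sum_nonneg fun i _ => sq_nonneg _
  have hVt0 : 0 ≤ V t₀ := Finset.sum_nonneg fun i _ => sq_nonneg _
  have h1 : eucNorm (p t₀) = Real.sqrt (V t₀) := rfl
  have h2 : eucNorm (p 0) = Real.sqrt (V 0) := rfl
  rw [h1, h2]
  have h3 : Real.sqrt (V t₀) ≤ Real.sqrt (V 0 * Real.exp (2 * Λ * t₀)) :=
    Real.sqrt_le_sqrt hVt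
  have h4 : Real.sqrt (V 0 * Real.exp (2 * Λ * t₀))
      = Real.sqrt (V 0) * Real.exp (Λ * t₀) := by
    rw [Real.sqrt_mul hV0, show (2 : ℝ) * Λ * t₀ = Λ * t₀ + Λ * t₀ by ring, Real.exp_add,
      ← sq, Real.sqrt_sq (Real.exp_pos _).le]
  rw [h4] at h3
  calc Real.sqrt (V t₀) ≤ Real.sqrt (V 0) * Real.exp (Λ * t₀) := h3
    _ = 1 * Real.exp (-(-Λ) * t₀) * Real.sqrt (V 0) := by rw [neg_neg]; ring
end

section
/- Suppose B = βI with β > 0, D = δI with δ > 0, and A(t) is symmetric, piecewise continuous in t, with zero diagonal and off-diagonal entries satisfying 0 ≤ a_{ij}(t) < 1 for all t ≥ 0. If n² − n < δ/β, then the disease-free equilibrium of the time-varying n-intertwined SIS model is globally exponentially stable: there exist c, λ > 0 such that every solution with componentwise nonnegative initial condition satisfies ‖p(t)‖ ≤ c e^{−λt} ‖p(0)‖ for all t ≥ 0. -/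
/-!
On the nonnegative orthant `V = ∑ pᵢ²` is a Lyapunov function: there
`(1 - pᵢ) pᵢ (A p)ᵢ ≤ pᵢ (A p)ᵢ`, and because `A` has zero diagonal and entries at most `1`,
`pᵀ A p ≤ (∑ pᵢ)² - ∑ pᵢ² ≤ (n - 1) V`. Hence `V' ≤ -2 (δ - β (n - 1)) V`, where
`β (n - 1) < δ` since `n - 1 ≤ n² - n < δ / β`; Grönwall's inequality gives the decay with
`c = 1`. The orthant is forward invariant: on a compact time interval the solution is bounded,
so the squared distance `∑ min(pᵢ, 0)²` to the orthant satisfies a linear differential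
inequality, and it vanishes at time `0`.
-/

open Matrix

open Finset Set Topology

theorem le_mul_exp_of_hasDerivAt_le {f f' : ℝ → ℝ} {K a b : ℝ} (hab : a ≤ b)
    (hf : ∀ s ∈ Icc a b, HasDerivAt f (f' s) s) (bound : ∀ s ∈ Icc a b, f' s ≤ K * f s) :
    f b ≤ f a * Real.exp (K * (b - a)) := by
  have := le_gronwallBound_of_liminf_deriv_right_le (ε := 0) (b := b)
    (fun s hs => (hf s hs).continuousAt.continuousWithinAt)
    (fun s hs _ hr => (hf s (Ico_subset_Icc_self hs)).hasDerivWithinAt.liminf_right_slope_le hr)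
    le_rfl (fun s hs => by simpa using bound s (Ico_subset_Icc_self hs)) b ⟨hab, le_rfl⟩
  rwa [gronwallBound_ε0] at this

theorem hasDerivAt_min_zero_sq (x : ℝ) :
    HasDerivAt (fun y => min y 0 ^ 2) (2 * min x 0) x := by
  have off_zero : ∀ y ≠ (0 : ℝ), HasDerivAt (fun y => min y 0 ^ 2) (2 * min y 0) y := by
    intro y hy
    rcases hy.lt_or_gt with hy | hy
    · have hloc : (fun z => min z 0 ^ 2) =ᶠ[𝓝 y] fun z => z ^ 2 := by
        filter_upwards [Iio_mem_nhds hy] with z hz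
        rw [min_eq_left hz.le]
      rw [min_eq_left hy.le]
      simpa using (hasDerivAt_pow 2 y).congr_of_eventuallyEq hloc
    · have hloc : (fun z => min z 0 ^ 2) =ᶠ[𝓝 y] fun _ => (0 : ℝ) := by
        filter_upwards [Ioi_mem_nhds hy] with z hz
        simp [min_eq_right (mem_Ioi.mp hz).le]
      rw [min_eq_right hy.le, mul_zero]
      exact (hasDerivAt_const y 0).congr_of_eventuallyEq hloc
  rcases eq_or_ne x 0 with rfl | hx
  · exact hasDerivAt_of_hasDerivAt_of_ne off_zero (by fun_prop) (by fun_prop)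
  · exact off_zero x hx

variable {ι : Type*} [Fintype ι]

theorem hasDerivAt_sum_comp {φ φ' : ℝ → ℝ} (hφ : ∀ y, HasDerivAt φ (φ' y) y)
    {p : ℝ → ι → ℝ} {v : ι → ℝ} {t : ℝ}
    (hp : ∀ i, HasDerivAt (fun s => p s i) (v i) t) :
    HasDerivAt (fun s => ∑ i, φ (p s i)) (∑ i, φ' (p t i) * v i) t :=
  HasDerivAt.fun_sum fun i _ => (hφ (p t i)).comp t (hp i)

section Matrix

variable {A : Matrix ι ι ℝ} {x : ι → ℝ}

theorem sum_min_zero_le_mulVec (hA0 : ∀ i j, 0 ≤ A i j) (hA1 : ∀ i j, A i j ≤ 1) (i : ι) :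
    ∑ j, min (x j) 0 ≤ (A *ᵥ x) i := by
  refine Finset.sum_le_sum fun j _ => ?_
  calc min (x j) 0 ≤ A i j * min (x j) 0 :=
        le_mul_of_le_one_left (min_le_right _ _) (hA1 i j)
    _ ≤ A i j * x j := mul_le_mul_of_nonneg_left (min_le_left _ _) (hA0 i j)

theorem mulVec_le_sum_sub_self (hx : 0 ≤ x) (hA1 : ∀ i j, A i j ≤ 1)
    (hdiag : ∀ i, A i i = 0) (i : ι) : (A *ᵥ x) i ≤ ∑ j, x j - x i := by
  classical
  calc (A *ᵥ x) i = ∑ j ∈ univ.erase i, A i j * x j := by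
        rw [mulVec, dotProduct, ← Finset.add_sum_erase _ _ (mem_univ i), hdiag, zero_mul,
          zero_add]
    _ ≤ ∑ j ∈ univ.erase i, x j :=
        Finset.sum_le_sum fun j _ => mul_le_of_le_one_left (hx j) (hA1 i j)
    _ = ∑ j, x j - x i := by rw [Finset.sum_erase_eq_sub (mem_univ i)]

theorem sum_mul_mulVec_le (hx : 0 ≤ x) (hA1 : ∀ i j, A i j ≤ 1) (hdiag : ∀ i, A i i = 0) :
    ∑ i, x i * (A *ᵥ x) i ≤ (Fintype.card ι - 1) * ∑ i, x i ^ 2 := by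
  calc ∑ i, x i * (A *ᵥ x) i ≤ ∑ i, x i * (∑ j, x j - x i) :=
        Finset.sum_le_sum fun i _ =>
          mul_le_mul_of_nonneg_left (mulVec_le_sum_sub_self hx hA1 hdiag i) (hx i)
    _ = (∑ i, x i) ^ 2 - ∑ i, x i ^ 2 := by
        simp only [mul_sub, Finset.sum_sub_distrib, ← Finset.sum_mul, sq]
    _ ≤ (Fintype.card ι - 1) * ∑ i, x i ^ 2 := by
        have := sq_sum_le_card_mul_sum_sq (s := univ) (f := x)
        rw [card_univ] at this
        linarith

end Matrix

def sisRate (β δ : ℝ) (A : Matrix ι ι ℝ) (x : ι → ℝ) : ι → ℝ :=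
  fun i => (1 - x i) * β * (A *ᵥ x) i - δ * x i

section Rate

variable {β δ : ℝ} {A : Matrix ι ι ℝ} {x : ι → ℝ}

theorem sum_mul_sisRate_le (hβ : 0 ≤ β) (hx : 0 ≤ x) (hA0 : ∀ i j, 0 ≤ A i j)
    (hA1 : ∀ i j, A i j ≤ 1) (hdiag : ∀ i, A i i = 0) :
    ∑ i, 2 * x i * sisRate β δ A x i
      ≤ -(2 * (δ - β * (Fintype.card ι - 1))) * ∑ i, x i ^ 2 := by
  have hterm : ∀ i, 2 * x i * sisRate β δ A x i
      ≤ 2 * β * (x i * (A *ᵥ x) i) - 2 * δ * x i ^ 2 := fun i => by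
    have hAx : 0 ≤ (A *ᵥ x) i := Finset.sum_nonneg fun j _ => mul_nonneg (hA0 i j) (hx j)
    have := mul_nonneg (mul_nonneg hβ (sq_nonneg (x i))) hAx
    simp only [sisRate]
    nlinarith
  calc ∑ i, 2 * x i * sisRate β δ A x i
      ≤ ∑ i, (2 * β * (x i * (A *ᵥ x) i) - 2 * δ * x i ^ 2) :=
        Finset.sum_le_sum fun i _ => hterm i
    _ = 2 * β * ∑ i, x i * (A *ᵥ x) i - 2 * δ * ∑ i, x i ^ 2 := by
        rw [Finset.sum_sub_distrib, ← Finset.mul_sum, ← Finset.mul_sum]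
    _ ≤ -(2 * (δ - β * (Fintype.card ι - 1))) * ∑ i, x i ^ 2 := by
        have := mul_le_mul_of_nonneg_left (sum_mul_mulVec_le hx hA1 hdiag) hβ
        linarith

theorem sum_min_zero_mul_sisRate_le (hβ : 0 ≤ β) (hδ : 0 ≤ δ) (hA0 : ∀ i j, 0 ≤ A i j)
    (hA1 : ∀ i j, A i j ≤ 1) {C : ℝ} (hC0 : 0 ≤ C) (hC : ∀ i, |x i| ≤ C) :
    ∑ i, 2 * min (x i) 0 * sisRate β δ A x i
      ≤ 2 * β * (1 + C) * Fintype.card ι * ∑ i, min (x i) 0 ^ 2 := by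
  set M := ∑ j, min (x j) 0
  have hM : M ≤ 0 := Finset.sum_nonpos fun j _ => min_le_right _ _
  have hterm : ∀ i,
      2 * min (x i) 0 * sisRate β δ A x i ≤ 2 * β * (1 + C) * (min (x i) 0 * M) := by
    intro i
    rcases le_or_gt 0 (x i) with hxi | hxi
    · simp [min_eq_right hxi]
    · have hS := sum_min_zero_le_mulVec (x := x) hA0 hA1 i
      have hCi : -x i ≤ C := by simpa [abs_of_neg hxi] using hC i
      rw [min_eq_left hxi.le]
      simp only [sisRate]
      -- `x i * (1 - x i) < 0`, so the lower bound `M` of `(A *ᵥ x) i` bounds the rate above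
      have h1 : x i * (1 - x i) * (A *ᵥ x) i ≤ x i * (1 - x i) * M :=
        mul_le_mul_of_nonpos_left hS (mul_nonpos_of_nonpos_of_nonneg hxi.le (by linarith))
      have h2 : x i * (1 - x i) * M ≤ (1 + C) * (x i * M) := by
        nlinarith [mul_nonneg_of_nonpos_of_nonpos hxi.le hM]
      nlinarith [mul_le_mul_of_nonneg_left (h1.trans h2) hβ, mul_nonneg hδ (sq_nonneg (x i))]
  calc ∑ i, 2 * min (x i) 0 * sisRate β δ A x i
      ≤ ∑ i, 2 * β * (1 + C) * (min (x i) 0 * M) := Finset.sum_le_sum fun i _ => hterm i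
    _ = 2 * β * (1 + C) * M ^ 2 := by rw [← Finset.mul_sum, ← Finset.sum_mul, sq]
    _ ≤ 2 * β * (1 + C) * Fintype.card ι * ∑ i, min (x i) 0 ^ 2 := by
        have := sq_sum_le_card_mul_sum_sq (s := univ) (f := fun i => min (x i) 0)
        rw [card_univ] at this
        rw [mul_assoc _ (Fintype.card ι : ℝ)]
        exact mul_le_mul_of_nonneg_left this (by positivity)

end Rate

def IsSISSolution (β δ : ℝ) (A : ℝ → Matrix ι ι ℝ) (p : ℝ → ι → ℝ) : Prop :=
  ∀ t, 0 ≤ t → ∀ i, HasDerivAt (fun s => p s i) (sisRate β δ (A t) (p t) i) t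

namespace IsSISSolution

variable {β δ : ℝ} {A : ℝ → Matrix ι ι ℝ} {p : ℝ → ι → ℝ}

theorem nonneg (hβ : 0 ≤ β) (hδ : 0 ≤ δ) (hA0 : ∀ t, 0 ≤ t → ∀ i j, 0 ≤ A t i j)
    (hA1 : ∀ t, 0 ≤ t → ∀ i j, A t i j ≤ 1) (hp : IsSISSolution β δ A p)
    (hp0 : 0 ≤ p 0) {t : ℝ} (ht : 0 ≤ t) : 0 ≤ p t := by
  obtain ⟨C, hC⟩ :=
    (isCompact_Icc (a := (0 : ℝ)) (b := t)).exists_bound_of_continuousOn (f := p)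
      fun s hs => (continuousAt_pi.2 fun i => (hp s hs.1 i).continuousAt).continuousWithinAt
  have hC0 : 0 ≤ C := (norm_nonneg _).trans (hC 0 ⟨le_rfl, ht⟩)
  set y : ℝ → ℝ := fun s => ∑ i, min (p s i) 0 ^ 2
  have hy : ∀ s ∈ Icc 0 t,
      HasDerivAt y (∑ i, 2 * min (p s i) 0 * sisRate β δ (A s) (p s) i) s :=
    fun s hs => hasDerivAt_sum_comp hasDerivAt_min_zero_sq (hp s hs.1)
  have hbound : ∀ s ∈ Icc 0 t, ∑ i, 2 * min (p s i) 0 * sisRate β δ (A s) (p s) i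
      ≤ 2 * β * (1 + C) * Fintype.card ι * y s := fun s hs =>
    sum_min_zero_mul_sisRate_le hβ hδ (hA0 s hs.1) (hA1 s hs.1) hC0
      fun i => (norm_le_pi_norm (p s) i).trans (hC s hs)
  have hy0 : y 0 = 0 := Finset.sum_eq_zero fun i _ => by simpa using hp0 i
  have hyt : y t ≤ 0 := by simpa [hy0] using le_mul_exp_of_hasDerivAt_le ht hy hbound
  intro i
  have := (Finset.sum_eq_zero_iff_of_nonneg fun i _ => sq_nonneg _).mp
    (le_antisymm hyt (by positivity)) i (mem_univ i)
  simpa using this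

theorem sum_sq_le (hβ : 0 ≤ β) (hδ : 0 ≤ δ) (hA0 : ∀ t, 0 ≤ t → ∀ i j, 0 ≤ A t i j)
    (hA1 : ∀ t, 0 ≤ t → ∀ i j, A t i j ≤ 1)
    (hdiag : ∀ t, 0 ≤ t → ∀ i, A t i i = 0)
    (hp : IsSISSolution β δ A p) (hp0 : 0 ≤ p 0) {t : ℝ} (ht : 0 ≤ t) :
    ∑ i, p t i ^ 2
      ≤ (∑ i, p 0 i ^ 2) * Real.exp (-(2 * (δ - β * (Fintype.card ι - 1))) * t) := by
  have hV : ∀ s ∈ Icc 0 t,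
      HasDerivAt (fun s => ∑ i, p s i ^ 2) (∑ i, 2 * p s i * sisRate β δ (A s) (p s) i) s :=
    fun s hs => hasDerivAt_sum_comp (fun y => by simpa using hasDerivAt_pow 2 y) (hp s hs.1)
  simpa using le_mul_exp_of_hasDerivAt_le ht hV fun s hs =>
    sum_mul_sisRate_le hβ (hp.nonneg hβ hδ hA0 hA1 hp0 hs.1) (hA0 s hs.1) (hA1 s hs.1)
      (hdiag s hs.1)

end IsSISSolution

theorem sis_frobenius_condition_GES_general
    {n : ℕ} (β δ : ℝ) (hβ : 0 < β) (hδ : 0 < δ)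
    (A : ℝ → Matrix (Fin n) (Fin n) ℝ)
    (hdiag : ∀ t, 0 ≤ t → ∀ i, A t i i = 0)
    (hnn : ∀ t, 0 ≤ t → ∀ i j, 0 ≤ A t i j)
    (hub : ∀ t, 0 ≤ t → ∀ i j, i ≠ j → A t i j < 1)
    (hcond : (n : ℝ) ^ 2 - (n : ℝ) < δ / β) :
    ∃ c > 0, ∃ lam > 0, ∀ p : ℝ → Fin n → ℝ,
      (∀ t, 0 ≤ t → ∀ i, HasDerivAt (fun s => p s i)
        ((1 - p t i) * β * (∑ j, A t i j * p t j) - δ * p t i) t) →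
      (∀ i, 0 ≤ p 0 i) →
      ∀ t, 0 ≤ t → eucNorm (p t) ≤ c * Real.exp (-lam * t) * eucNorm (p 0) := by
  have hA1 : ∀ t, 0 ≤ t → ∀ i j, A t i j ≤ 1 := fun t ht i j => by
    rcases eq_or_ne i j with rfl | hij
    · simp [hdiag t ht]
    · exact (hub t ht i j hij).le
  have hlam : 0 < δ - β * (n - 1) := by
    have := (lt_div_iff₀ hβ).mp hcond
    nlinarith [mul_nonneg hβ.le (sq_nonneg ((n : ℝ) - 1))]
  refine ⟨1, one_pos, δ - β * (n - 1), hlam, fun p hp hp0 t ht => ?_⟩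
  have hV := IsSISSolution.sum_sq_le hβ.le hδ.le hnn hA1 hdiag hp hp0 ht
  rw [Fintype.card_fin] at hV
  have hexp : Real.exp (-(2 * (δ - β * (n - 1))) * t)
      = Real.exp (-(δ - β * (n - 1)) * t) ^ 2 := by
    rw [sq, ← Real.exp_add]
    ring_nf
  calc eucNorm (p t) ≤ √((∑ i, p 0 i ^ 2) * Real.exp (-(2 * (δ - β * (n - 1))) * t)) :=
        Real.sqrt_le_sqrt hV
    _ = 1 * Real.exp (-(δ - β * (n - 1)) * t) * eucNorm (p 0) := by
        rw [hexp, Real.sqrt_mul' _ (sq_nonneg _), Real.sqrt_sq (Real.exp_pos _).le, eucNorm]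
        ring

/-- **A conservative eradication condition for bounded-weight dynamic graphs.**
Suppose `B = βI` with `β > 0`, `D = δI` with `δ > 0`, and `A(t)` is symmetric with zero
diagonal and off-diagonal entries `0 ≤ a_{ij}(t) < 1` for all `t ≥ 0`.  If
`n² − n < δ/β`, then the DFE of the time-varying n-intertwined SIS model is globally
exponentially stable. -/
theorem sis_frobenius_condition_GES
    {n : ℕ} (β δ : ℝ) (hβ : 0 < β) (hδ : 0 < δ)
    (A : ℝ → Matrix (Fin n) (Fin n) ℝ)
    (hsym : ∀ t, 0 ≤ t → (A t).IsSymm)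
    (hdiag : ∀ t, 0 ≤ t → ∀ i, A t i i = 0)
    (hnn : ∀ t, 0 ≤ t → ∀ i j, 0 ≤ A t i j)
    (hub : ∀ t, 0 ≤ t → ∀ i j, i ≠ j → A t i j < 1)
    (hcond : (n : ℝ) ^ 2 - (n : ℝ) < δ / β) :
    ∃ c > 0, ∃ lam > 0, ∀ p : ℝ → Fin n → ℝ,
      (∀ t, 0 ≤ t → ∀ i, HasDerivAt (fun s => p s i)
        ((1 - p t i) * β * (∑ j, A t i j * p t j) - δ * p t i) t) →
      (∀ i, 0 ≤ p 0 i) →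
      ∀ t, 0 ≤ t → eucNorm (p t) ≤ c * Real.exp (-lam * t) * eucNorm (p 0) :=
  sis_frobenius_condition_GES_general β δ hβ hδ A hdiag hnn hub hcond
end

section
/- Consider the autonomous n-intertwined SIS model ṗ(t) = (BA − P(t)BA − D)p(t) with constant matrix A with nonnegative entries and zero diagonal, B = diag(β_1,…,β_n) with β_i ≥ 0, and D = diag(δ_1,…,δ_n) with δ_i ≥ 0. If s₁(BA − D) > 0, where s₁ denotes the largest real part of the eigenvalues, then the origin (the disease-free equilibrium) is an unstable equilibrium: there exists ε > 0 such that for every δ > 0 there is an initial condition p(0) with componentwise nonnegative entries and 0 < ‖p(0)‖ < δ whose solution satisfies ‖p(t)‖ ≥ ε for some t > 0. -/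
open Matrix

open Set


open Set

/-- Barrier lemma: if `f 0 ≤ a` and the derivative of `f` is nonpositive whenever `f` is
above `a` (at positive times), then `f t ≤ a` for all `t ≥ 0`. -/
lemma barrier_le {f g : ℝ → ℝ} {a : ℝ} (hf : ∀ t, HasDerivAt f (g t) t)
    (hd : ∀ t, 0 < t → a < f t → g t ≤ 0) (h0 : f 0 ≤ a) :
    ∀ t, 0 ≤ t → f t ≤ a := by
  intro t₁ ht₁
  by_contra hgt
  push_neg at hgt
  have hcont : Continuous f := by
    have : Differentiable ℝ f := fun t => (hf t).differentiableAt
    exact this.continuous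
  have ht₁0 : 0 < t₁ := by
    rcases lt_or_eq_of_le ht₁ with h | h
    · exact h
    · exfalso; rw [← h] at hgt; linarith
  set S : Set ℝ := Icc 0 t₁ ∩ f ⁻¹' (Iic a) with hS
  have hSclosed : IsClosed S := (isClosed_Icc).inter (isClosed_Iic.preimage hcont)
  have hSne : S.Nonempty := ⟨0, ⟨le_rfl, ht₁⟩, h0⟩
  have hSbdd : BddAbove S := ⟨t₁, fun x hx => hx.1.2⟩
  set s := sSup S with hs
  have hsS : s ∈ S := hSclosed.csSup_mem hSne hSbdd
  have hst₁ : s ≤ t₁ := hsS.1.2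
  have hs0 : 0 ≤ s := hsS.1.1
  have hfs : f s ≤ a := hsS.2
  have hslt : s < t₁ := lt_of_le_of_ne hst₁ (fun h => by rw [h] at hfs; linarith)
  have habove : ∀ x ∈ Ioo s t₁, a < f x := by
    intro x hx
    by_contra hle
    push_neg at hle
    have : x ∈ S := ⟨⟨hs0.trans hx.1.le, hx.2.le⟩, hle⟩
    exact absurd (le_csSup hSbdd this) (not_le.mpr hx.1)
  have hanti : AntitoneOn f (Icc s t₁) := by
    apply antitoneOn_of_deriv_nonpos (convex_Icc s t₁) (hcont.continuousOn)
    · intro x hx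
      exact (hf x).differentiableAt.differentiableWithinAt
    · intro x hx
      rw [interior_Icc] at hx
      rw [(hf x).deriv]
      exact hd x (lt_of_le_of_lt hs0 hx.1) (habove x hx)
  have := hanti (left_mem_Icc.mpr hslt.le) (right_mem_Icc.mpr hslt.le) hslt.le
  linarith

lemma barrier_ge {f g : ℝ → ℝ} {a : ℝ} (hf : ∀ t, HasDerivAt f (g t) t)
    (hd : ∀ t, 0 < t → f t < a → 0 ≤ g t) (h0 : a ≤ f 0) :
    ∀ t, 0 ≤ t → a ≤ f t := by
  have := barrier_le (f := fun t => -f t) (g := fun t => -g t) (a := -a)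
    (fun t => (hf t).neg) (fun t ht hlt => by simp only [neg_nonpos]; exact hd t ht (by simp only [neg_lt_neg_iff] at hlt; linarith))
    (by simpa using h0)
  intro t ht
  have := this t ht
  simpa using this


open Matrix

lemma eigen_superharmonic {n : ℕ} (β δ : Fin n → ℝ) (hβ : ∀ i, 0 ≤ β i) (hδ : ∀ i, 0 ≤ δ i)
    (A : Matrix (Fin n) (Fin n) ℝ)
    (hAnn : ∀ i j, 0 ≤ A i j) (hAdiag : ∀ i, A i i = 0)
    {μ : ℂ} (hμ : μ ∈ spectrum ℂ
      ((Matrix.diagonal β * A - Matrix.diagonal δ).map Complex.ofReal)) :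
    ∃ w : Fin n → ℝ, (∀ i, 0 ≤ w i) ∧ (∃ i, w i ≠ 0) ∧
      ∀ j, (μ.re + δ j) * w j ≤ ∑ i, β i * A i j * w i := by
  set M : Matrix (Fin n) (Fin n) ℝ := Matrix.diagonal β * A - Matrix.diagonal δ with hM
  set M' : Matrix (Fin n) (Fin n) ℂ := M.map Complex.ofReal with hM'
  rw [spectrum.mem_iff] at hμ
  have hdet : (algebraMap ℂ (Matrix (Fin n) (Fin n) ℂ) μ - M').det = 0 := by
    by_contra h
    exact hμ ((Matrix.isUnit_iff_isUnit_det _).mpr (isUnit_iff_ne_zero.mpr h))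
  have hdetT : ((algebraMap ℂ (Matrix (Fin n) (Fin n) ℂ) μ - M')ᵀ).det = 0 := by
    rw [Matrix.det_transpose]; exact hdet
  obtain ⟨u, hu0, huv⟩ := (Matrix.exists_mulVec_eq_zero_iff).mpr hdetT
  -- eigen equation: ∀ j, ∑ i, (M i j : ℂ) * u i = μ * u j
  have heig : ∀ j, ∑ i, (M i j : ℂ) * u i = μ * u j := by
    have hMt : ∀ i j, M'ᵀ j i = (M i j : ℂ) := fun i j => by
      rw [Matrix.transpose_apply, hM', Matrix.map_apply]
    have htr : (algebraMap ℂ (Matrix (Fin n) (Fin n) ℂ) μ - M')ᵀ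
        = (algebraMap ℂ (Matrix (Fin n) (Fin n) ℂ) μ) - M'ᵀ := by
      rw [Matrix.transpose_sub, Algebra.algebraMap_eq_smul_one, Matrix.transpose_smul,
        Matrix.transpose_one]
    rw [htr, Matrix.sub_mulVec, sub_eq_zero, Algebra.algebraMap_eq_smul_one,
      Matrix.smul_mulVec, Matrix.one_mulVec] at huv
    intro j
    have := congrFun huv.symm j
    simp only [Matrix.mulVec, dotProduct, Pi.smul_apply, smul_eq_mul] at this
    rw [← this]
    apply Finset.sum_congr rfl
    intro i _
    rw [hMt]
  -- entries of M
  have hMdiag : ∀ j, M j j = -δ j := by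
    intro j
    simp [hM, Matrix.sub_apply, Matrix.diagonal_mul, hAdiag j, Matrix.diagonal_apply_eq]
  have hMoff : ∀ i j, i ≠ j → M i j = β i * A i j := by
    intro i j hij
    simp [hM, Matrix.sub_apply, Matrix.diagonal_mul, Matrix.diagonal_apply_ne _ hij]
  refine ⟨fun i => ‖u i‖, fun i => norm_nonneg _, ?_, ?_⟩
  · obtain ⟨i, hi⟩ := Function.ne_iff.mp hu0
    exact ⟨i, fun h => hi ((norm_eq_zero).mp h)⟩
  intro j
  -- split the eigen equation
  have hsplit : ∑ i ∈ Finset.univ.erase j, (M i j : ℂ) * u i = (μ + δ j) * u j := by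
    have := heig j
    rw [← Finset.add_sum_erase Finset.univ _ (Finset.mem_univ j)] at this
    have hMjj : (M j j : ℂ) = -(δ j : ℂ) := by rw [hMdiag j]; push_cast; ring
    rw [hMjj] at this
    linear_combination this + (δ j : ℂ) * u j * 1 - 0
  have habs1 : ‖(μ + δ j) * u j‖ ≤ ∑ i ∈ Finset.univ.erase j, β i * A i j * ‖u i‖ := by
    rw [← hsplit]
    refine le_trans (norm_sum_le _ _) ?_
    apply Finset.sum_le_sum
    intro i hi
    have hij : i ≠ j := Finset.ne_of_mem_erase hi
    rw [norm_mul, hMoff i j hij]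
    rw [Complex.norm_real, Real.norm_eq_abs, abs_of_nonneg (mul_nonneg (hβ i) (hAnn i j))]
  have habs2 : (μ.re + δ j) * ‖u j‖ ≤ ‖(μ + δ j) * u j‖ := by
    rw [norm_mul]
    apply mul_le_mul_of_nonneg_right _ (norm_nonneg _)
    calc μ.re + δ j = (μ + (δ j : ℂ)).re := by simp
      _ ≤ ‖μ + δ j‖ := Complex.re_le_norm _
  have hsum : ∑ i ∈ Finset.univ.erase j, β i * A i j * ‖u i‖
      ≤ ∑ i, β i * A i j * ‖u i‖ := by
    apply Finset.sum_le_sum_of_subset_of_nonneg (Finset.erase_subset _ _)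
    intro i _ _
    exact mul_nonneg (mul_nonneg (hβ i) (hAnn i j)) (norm_nonneg _)
  calc (μ.re + δ j) * ‖u j‖ ≤ ‖(μ + δ j) * u j‖ := habs2
    _ ≤ ∑ i ∈ Finset.univ.erase j, β i * A i j * ‖u i‖ := habs1
    _ ≤ ∑ i, β i * A i j * ‖u i‖ := hsum



lemma eucNorm_nonneg {n : ℕ} (x : Fin n → ℝ) : 0 ≤ eucNorm x := Real.sqrt_nonneg _

lemma abs_le_eucNorm {n : ℕ} (x : Fin n → ℝ) (i : Fin n) : |x i| ≤ eucNorm x := by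
  rw [← Real.sqrt_sq_eq_abs]
  exact Real.sqrt_le_sqrt (Finset.single_le_sum (fun j _ => sq_nonneg (x j)) (Finset.mem_univ i))

lemma eucNorm_smul {n : ℕ} (r : ℝ) (hr : 0 ≤ r) (x : Fin n → ℝ) :
    eucNorm (fun i => r * x i) = r * eucNorm x := by
  unfold eucNorm
  rw [show ∑ i, (r * x i) ^ 2 = r ^ 2 * ∑ i, x i ^ 2 by rw [Finset.mul_sum]; ring_nf]
  rw [Real.sqrt_mul (sq_nonneg r), Real.sqrt_sq hr]

lemma eucNorm_pos {n : ℕ} (x : Fin n → ℝ) (i : Fin n) (hi : x i ≠ 0) : 0 < eucNorm x :=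
  lt_of_lt_of_le (abs_pos.mpr hi) (abs_le_eucNorm x i)

/-- clamp to [0,1] -/
noncomputable def cl01 (x : ℝ) : ℝ := min (max x 0) 1

lemma cl01_nonneg (x : ℝ) : 0 ≤ cl01 x := le_min (le_max_right x 0) zero_le_one

lemma cl01_le_one (x : ℝ) : cl01 x ≤ 1 := min_le_right _ _

lemma cl01_eq_self {x : ℝ} (h0 : 0 ≤ x) (h1 : x ≤ 1) : cl01 x = x := by
  unfold cl01; rw [max_eq_left h0, min_eq_left h1]

lemma cl01_of_one_lt {x : ℝ} (h : 1 < x) : cl01 x = 1 := by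
  unfold cl01; rw [max_eq_left (by linarith), min_eq_right (by linarith)]

lemma cl01_of_neg {x : ℝ} (h : x < 0) : cl01 x = 0 := by
  unfold cl01; rw [max_eq_right (by linarith), min_eq_left (by linarith)]

lemma cl01_lipschitz (a b : ℝ) : |cl01 a - cl01 b| ≤ |a - b| := by
  unfold cl01
  calc |min (max a 0) 1 - min (max b 0) 1|
      ≤ max |max a 0 - max b 0| |(1:ℝ) - 1| := abs_min_sub_min_le_max _ _ _ _
    _ ≤ |a - b| := by
        rw [sub_self, abs_zero]
        exact max_le (abs_max_sub_max_le_abs a b 0) (abs_nonneg _)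

noncomputable def sisF {n : ℕ} (β δ : Fin n → ℝ) (A : Matrix (Fin n) (Fin n) ℝ)
    (x : Fin n → ℝ) : Fin n → ℝ :=
  fun i => (1 - cl01 (x i)) * β i * (∑ j, A i j * cl01 (x j)) - δ i * cl01 (x i)

section FieldProps
variable {n : ℕ} (β δ : Fin n → ℝ) (A : Matrix (Fin n) (Fin n) ℝ)

lemma sisF_bound (hβ : ∀ i, 0 ≤ β i) (hδ : ∀ i, 0 ≤ δ i) (hAnn : ∀ i j, 0 ≤ A i j)
    (x : Fin n → ℝ) :
    ‖sisF β δ A x‖ ≤ (1 + ∑ i, β i * ∑ j, A i j) + (1 + ∑ i, δ i) := by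
  set K : ℝ := 1 + ∑ i, β i * ∑ j, A i j with hK
  set Kd : ℝ := 1 + ∑ i, δ i with hKd
  have hKnn : ∀ i, β i * ∑ j, A i j ≤ K := by
    intro i
    have h1 : β i * ∑ j, A i j ≤ ∑ i', β i' * ∑ j, A i' j :=
      Finset.single_le_sum (f := fun i' => β i' * ∑ j, A i' j)
        (fun i' _ => mul_nonneg (hβ i') (Finset.sum_nonneg fun j _ => hAnn i' j))
        (Finset.mem_univ i)
    linarith
  have hKdnn : ∀ i, δ i ≤ Kd := by
    intro i
    have h1 : δ i ≤ ∑ i', δ i' := Finset.single_le_sum (fun i' _ => hδ i') (Finset.mem_univ i)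
    linarith
  have hKpos : 0 ≤ K := by
    have : 0 ≤ ∑ i, β i * ∑ j, A i j :=
      Finset.sum_nonneg fun i _ => mul_nonneg (hβ i) (Finset.sum_nonneg fun j _ => hAnn i j)
    linarith
  have hKdpos : 0 ≤ Kd := by
    have : 0 ≤ ∑ i, δ i := Finset.sum_nonneg fun i _ => hδ i
    linarith
  rw [pi_norm_le_iff_of_nonneg (by linarith)]
  intro i
  rw [Real.norm_eq_abs]
  unfold sisF
  have hScl : 0 ≤ ∑ j, A i j * cl01 (x j) ∧ ∑ j, A i j * cl01 (x j) ≤ ∑ j, A i j := by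
    constructor
    · exact Finset.sum_nonneg fun j _ => mul_nonneg (hAnn i j) (cl01_nonneg _)
    · exact Finset.sum_le_sum fun j _ => by
        nlinarith [cl01_le_one (x j), hAnn i j, cl01_nonneg (x j)]
  have ha := cl01_nonneg (x i)
  have ha1 := cl01_le_one (x i)
  have hb := hβ i
  have hd := hδ i
  rw [abs_le]
  constructor
  · nlinarith [hKnn i, hKdnn i, hScl.1, hScl.2, mul_nonneg hb hScl.1]
  · nlinarith [hKnn i, hKdnn i, hScl.1, hScl.2, mul_nonneg hb hScl.1,
      mul_le_mul_of_nonneg_left hScl.2 hb]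

lemma sisF_lipschitz (hβ : ∀ i, 0 ≤ β i) (hδ : ∀ i, 0 ≤ δ i) (hAnn : ∀ i j, 0 ≤ A i j) :
    LipschitzWith (Real.toNNReal (2 * (1 + ∑ i, β i * ∑ j, A i j) + (1 + ∑ i, δ i)))
      (sisF β δ A) := by
  set K : ℝ := 1 + ∑ i, β i * ∑ j, A i j with hK
  set Kd : ℝ := 1 + ∑ i, δ i with hKd
  have hKnn : ∀ i, β i * ∑ j, A i j ≤ K := by
    intro i
    have h1 : β i * ∑ j, A i j ≤ ∑ i', β i' * ∑ j, A i' j :=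
      Finset.single_le_sum (f := fun i' => β i' * ∑ j, A i' j)
        (fun i' _ => mul_nonneg (hβ i') (Finset.sum_nonneg fun j _ => hAnn i' j))
        (Finset.mem_univ i)
    linarith
  have hKdnn : ∀ i, δ i ≤ Kd := fun i => by
    have h1 : δ i ≤ ∑ i', δ i' := Finset.single_le_sum (fun i' _ => hδ i') (Finset.mem_univ i)
    linarith
  have hco : (0:ℝ) ≤ 2 * K + Kd := by
    have h0 : 0 ≤ ∑ i, β i * ∑ j, A i j :=
      Finset.sum_nonneg fun i _ => mul_nonneg (hβ i) (Finset.sum_nonneg fun j _ => hAnn i j)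
    have h1 : 0 ≤ ∑ i, δ i := Finset.sum_nonneg fun i _ => hδ i
    simp only [hK, hKd]
    linarith
  apply LipschitzWith.of_dist_le_mul
  intro x y
  have hd0 : 0 ≤ dist x y := dist_nonneg
  rw [Real.coe_toNNReal _ hco]
  rw [dist_pi_le_iff (mul_nonneg hco hd0)]
  intro i
  set d : ℝ := dist x y with hdd
  have hcl : ∀ j, |cl01 (x j) - cl01 (y j)| ≤ d := by
    intro j
    refine le_trans (cl01_lipschitz _ _) ?_
    rw [← Real.dist_eq]
    exact dist_le_pi_dist x y j
  set a : ℝ := cl01 (x i)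
  set b : ℝ := cl01 (y i)
  set Sx : ℝ := ∑ j, A i j * cl01 (x j) with hSx
  set Sy : ℝ := ∑ j, A i j * cl01 (y j) with hSy
  have hSxy : |Sx - Sy| ≤ (∑ j, A i j) * d := by
    rw [hSx, hSy, ← Finset.sum_sub_distrib]
    refine le_trans (Finset.abs_sum_le_sum_abs _ _) ?_
    rw [Finset.sum_mul]
    apply Finset.sum_le_sum
    intro j _
    rw [show A i j * cl01 (x j) - A i j * cl01 (y j) = A i j * (cl01 (x j) - cl01 (y j)) by ring,
      abs_mul, abs_of_nonneg (hAnn i j)]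
    exact mul_le_mul_of_nonneg_left (hcl j) (hAnn i j)
  have hSybd : 0 ≤ Sy ∧ Sy ≤ ∑ j, A i j := by
    constructor
    · exact Finset.sum_nonneg fun j _ => mul_nonneg (hAnn i j) (cl01_nonneg _)
    · exact Finset.sum_le_sum fun j _ => by
        nlinarith [cl01_le_one (y j), hAnn i j, cl01_nonneg (y j)]
  have hab : |a - b| ≤ d := hcl i
  have ha := cl01_nonneg (x i); have ha1 := cl01_le_one (x i)
  have hb' := cl01_nonneg (y i); have hb1 := cl01_le_one (y i)
  have hSA : β i * ∑ j, A i j ≤ K := hKnn i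
  have hSAnn : 0 ≤ ∑ j, A i j := Finset.sum_nonneg fun j _ => hAnn i j
  rw [Real.dist_eq]
  unfold sisF
  have hident : (1 - a) * β i * Sx - δ i * a - ((1 - b) * β i * Sy - δ i * b)
      = (1 - a) * β i * (Sx - Sy) + (b - a) * (β i * Sy) + δ i * (b - a) := by ring
  rw [hident]
  refine le_trans (abs_add_le _ _) ?_
  have t1 : |(1 - a) * β i * (Sx - Sy)| ≤ K * d := by
    rw [abs_mul, abs_mul]
    have h1a : |1 - a| ≤ 1 := by rw [abs_le]; constructor <;> linarith
    have : |1 - a| * |β i| * |Sx - Sy| ≤ 1 * β i * ((∑ j, A i j) * d) := by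
      apply mul_le_mul
      · apply mul_le_mul h1a (le_of_eq (abs_of_nonneg (hβ i))) (abs_nonneg _) zero_le_one
      · exact hSxy
      · exact abs_nonneg _
      · exact mul_nonneg zero_le_one (hβ i)
    nlinarith [mul_le_mul_of_nonneg_right hSA hd0]
  have t2 : |(1 - a) * β i * (Sx - Sy) + (b - a) * (β i * Sy)|
      ≤ |(1 - a) * β i * (Sx - Sy)| + |(b - a) * (β i * Sy)| := abs_add_le _ _
  have t3 : |(b - a) * (β i * Sy)| ≤ K * d := by
    rw [abs_mul]
    have h1 : |b - a| ≤ d := by rw [abs_sub_comm]; exact hab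
    have h2 : |β i * Sy| ≤ K := by
      rw [abs_of_nonneg (mul_nonneg (hβ i) hSybd.1)]
      exact le_trans (mul_le_mul_of_nonneg_left hSybd.2 (hβ i)) hSA
    nlinarith [abs_nonneg (b - a), abs_nonneg (β i * Sy)]
  have t4 : |δ i * (b - a)| ≤ Kd * d := by
    rw [abs_mul, abs_of_nonneg (hδ i), abs_sub_comm]
    exact mul_le_mul (hKdnn i) hab (abs_nonneg _) (le_trans (hδ i) (hKdnn i))
  calc |(1 - a) * β i * (Sx - Sy) + (b - a) * (β i * Sy)| + |δ i * (b - a)|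
      ≤ (|(1 - a) * β i * (Sx - Sy)| + |(b - a) * (β i * Sy)|) + |δ i * (b - a)| := by linarith
    _ ≤ (K * d + K * d) + Kd * d := by linarith
    _ = (2 * K + Kd) * d := by ring

end FieldProps


open Set

/-- Global existence of solutions for an autonomous ODE with globally Lipschitz and
globally bounded right-hand side. -/
lemma exists_global_solution {E : Type*} [NormedAddCommGroup E] [NormedSpace ℝ E]
    [CompleteSpace E] (F : E → E) (K : NNReal) (hK : LipschitzWith K F)
    {C : ℝ} (hC : ∀ x, ‖F x‖ ≤ C) (x₀ : E) :
    ∃ p : ℝ → E, p 0 = x₀ ∧ ∀ t, HasDerivAt p (F (p t)) t := by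
  have hC0 : 0 ≤ C := le_trans (norm_nonneg _) (hC x₀)
  -- solutions on [-(k+1), k+1]
  have hsol : ∀ k : ℕ, ∃ f : ℝ → E, f 0 = x₀ ∧ ∀ t ∈ Icc (-((k : ℝ) + 1)) ((k : ℝ) + 1),
      HasDerivWithinAt f (F (f t)) (Icc (-((k : ℝ) + 1)) ((k : ℝ) + 1)) t := by
    intro k
    set T : ℝ := (k : ℝ) + 1 with hT
    have hT0 : 0 < T := by positivity
    have hpl : IsPicardLindelof (fun _ x => F x) (tmin := -T) (tmax := T)
        ⟨0, ⟨by linarith, hT0.le⟩⟩ x₀ (Real.toNNReal (C * T)) 0 (Real.toNNReal C) K :=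
      { lipschitzOnWith := fun t _ => hK.lipschitzOnWith
        continuousOn := fun x _ => continuousOn_const
        norm_le := fun t _ x _ => by rw [Real.coe_toNNReal _ hC0]; exact hC x
        mul_max_le := by
          rw [Real.coe_toNNReal _ hC0, Real.coe_toNNReal _ (by positivity)]
          simp only [NNReal.coe_zero, sub_zero, zero_sub, neg_neg, max_self]
          exact le_rfl }
    exact hpl.exists_eq_forall_mem_Icc_hasDerivWithinAt₀
  choose sol hsol0 hsolder using hsol
  -- agreement of the solutions
  have key : ∀ j k : ℕ, ∀ t : ℝ, |t| ≤ (j : ℝ) + 1 → |t| ≤ (k : ℝ) + 1 →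
      sol j t = sol k t := by
    have main : ∀ j : ℕ, ∀ b : ℝ, b ≤ (j : ℝ) + 1 →
        (ContinuousOn (sol j) (Icc (-b) b)) ∧
        (∀ t ∈ Ico 0 b, HasDerivWithinAt (sol j) (F (sol j t)) (Ici t) t) ∧
        (∀ t ∈ Ioc (-b) 0, HasDerivWithinAt (sol j) (F (sol j t)) (Iic t) t) := by
      intro j b hb
      have hsub : Icc (-b) b ⊆ Icc (-((j : ℝ) + 1)) ((j : ℝ) + 1) :=
        Icc_subset_Icc (by linarith) hb
      refine ⟨?_, ?_, ?_⟩
      · intro t ht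
        exact ((hsolder j t (hsub ht)).continuousWithinAt).mono hsub
      · intro t ht
        have htm : t ∈ Icc (-((j : ℝ) + 1)) ((j : ℝ) + 1) :=
          ⟨by linarith [ht.1], by linarith [ht.2]⟩
        refine (hsolder j t htm).mono_of_mem_nhdsWithin ?_
        exact Icc_mem_nhdsGE_of_mem ⟨htm.1, by linarith [ht.2]⟩
      · intro t ht
        have htm : t ∈ Icc (-((j : ℝ) + 1)) ((j : ℝ) + 1) :=
          ⟨by linarith [ht.1], by linarith [ht.2]⟩
        refine (hsolder j t htm).mono_of_mem_nhdsWithin ?_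
        exact Icc_mem_nhdsLE_of_mem ⟨by linarith [ht.1], htm.2⟩
    intro j k t htj htk
    rcases le_total 0 t with ht0 | ht0
    · -- forward uniqueness on [0, t]
      have hbj := (main j t (by rwa [abs_of_nonneg ht0] at htj))
      have hbk := (main k t (by rwa [abs_of_nonneg ht0] at htk))
      have := ODE_solution_unique (v := fun _ x => F x) (K := K) (fun _ => hK)
        (hbj.1.mono (Icc_subset_Icc (by linarith) le_rfl))
        (fun s hs => hbj.2.1 s hs)
        (hbk.1.mono (Icc_subset_Icc (by linarith) le_rfl))
        (fun s hs => hbk.2.1 s hs)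
        ((hsol0 j).trans (hsol0 k).symm)
      exact this ⟨ht0, le_rfl⟩
    · -- backward uniqueness on [t, 0]
      have habs : |t| = -t := abs_of_nonpos ht0
      have hbj := (main j (-t) (by rwa [habs] at htj))
      have hbk := (main k (-t) (by rwa [habs] at htk))
      rw [neg_neg] at hbj hbk
      have := ODE_solution_unique_of_mem_Icc_left (v := fun _ x => F x) (K := K)
        (s := fun _ => univ) (fun _ _ => hK.lipschitzOnWith)
        (hbj.1.mono (Icc_subset_Icc le_rfl (by linarith)))
        (fun s hs => hbj.2.2 s hs) (fun _ _ => trivial)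
        (hbk.1.mono (Icc_subset_Icc le_rfl (by linarith)))
        (fun s hs => hbk.2.2 s hs) (fun _ _ => trivial)
        ((hsol0 j).trans (hsol0 k).symm)
      exact this ⟨le_rfl, ht0⟩
  -- glue
  refine ⟨fun t => sol (⌈|t|⌉₊ + 1) t, by simpa using hsol0 1, ?_⟩
  intro t
  set k : ℕ := ⌈|t|⌉₊ + 1 with hk
  have htlt : |t| < (k : ℝ) + 1 := by
    have := Nat.le_ceil |t|
    push_cast [hk]
    linarith
  have hmem : Icc (-((k : ℝ) + 1)) ((k : ℝ) + 1) ∈ nhds t := by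
    rcases abs_lt.mp htlt with ⟨h1, h2⟩
    exact Icc_mem_nhds (by linarith) h2
  have hder : HasDerivAt (sol k) (F (sol k t)) t :=
    (hsolder k t (mem_of_mem_nhds hmem)).hasDerivAt hmem
  have heq : (fun s => sol (⌈|s|⌉₊ + 1) s) =ᶠ[nhds t] sol k := by
    have hball : Metric.ball t 1 ∈ nhds t := Metric.ball_mem_nhds t one_pos
    filter_upwards [hball] with s hs
    have hst : |s| ≤ |t| + 1 := by
      have := abs_sub_abs_le_abs_sub s t
      have : |s| - |t| ≤ |s - t| := this
      have hd : |s - t| < 1 := by rwa [Metric.mem_ball, Real.dist_eq] at hs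
      linarith
    apply key
    · have := Nat.le_ceil |s|
      push_cast
      linarith
    · have := Nat.le_ceil |t|
      push_cast [hk]
      linarith
  have heqt : sol (⌈|t|⌉₊ + 1) t = sol k t := rfl
  rw [show (fun s => sol (⌈|s|⌉₊ + 1) s) t = sol k t from heqt] at *
  exact hder.congr_of_eventuallyEq heq

/-- **Instability of the DFE when `s₁(BA − D) > 0` (static graph).**
Consider the autonomous n-intertwined SIS model with constant `A` (nonnegative entries,
zero diagonal), `β_i ≥ 0`, `δ_i ≥ 0`.  If some eigenvalue of `BA − D` has positive real
part, then the origin is unstable: there is `ε > 0` such that for every `δ' > 0` there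
is a solution with componentwise nonnegative initial condition `0 < ‖p(0)‖ < δ'` that
satisfies `‖p(t)‖ ≥ ε` for some `t > 0`. -/
theorem sis_static_DFE_unstable
    {n : ℕ} (β δ : Fin n → ℝ) (hβ : ∀ i, 0 ≤ β i) (hδ : ∀ i, 0 ≤ δ i)
    (A : Matrix (Fin n) (Fin n) ℝ)
    (hAnn : ∀ i j, 0 ≤ A i j) (hAdiag : ∀ i, A i i = 0)
    (hspec : ∃ μ ∈ spectrum ℂ
      ((Matrix.diagonal β * A - Matrix.diagonal δ).map Complex.ofReal), 0 < μ.re) :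
    ∃ ε > 0, ∀ δ' > 0, ∃ p : ℝ → Fin n → ℝ,
      (∀ t, 0 ≤ t → ∀ i, HasDerivAt (fun s => p s i)
        ((1 - p t i) * β i * (∑ j, A i j * p t j) - δ i * p t i) t) ∧
      (∀ i, 0 ≤ p 0 i) ∧ 0 < eucNorm (p 0) ∧ eucNorm (p 0) < δ' ∧
      ∃ t > 0, ε ≤ eucNorm (p t) := by
  obtain ⟨μ, hμmem, hμre⟩ := hspec
  obtain ⟨w, hw0, ⟨i₀, hwi₀⟩, hsup⟩ := eigen_superharmonic β δ hβ hδ A hAnn hAdiag hμmem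
  set lam : ℝ := μ.re with hlam
  set K : ℝ := 1 + ∑ i, β i * ∑ j, A i j with hKdef
  have hKnn : ∀ i, β i * ∑ j, A i j ≤ K := by
    intro i
    have h1 : β i * ∑ j, A i j ≤ ∑ i', β i' * ∑ j, A i' j :=
      Finset.single_le_sum (f := fun i' => β i' * ∑ j, A i' j)
        (fun i' _ => mul_nonneg (hβ i') (Finset.sum_nonneg fun j _ => hAnn i' j))
        (Finset.mem_univ i)
    simp only [hKdef]; linarith
  have hK0 : 0 < K := by
    have : 0 ≤ ∑ i, β i * ∑ j, A i j :=
      Finset.sum_nonneg fun i _ => mul_nonneg (hβ i) (Finset.sum_nonneg fun j _ => hAnn i j)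
    simp only [hKdef]; linarith
  set η : ℝ := min (lam / (2 * K)) (1/2) with hηdef
  have hη0 : 0 < η := lt_min (div_pos hμre (by linarith)) (by norm_num)
  have hη1 : η ≤ 1/2 := min_le_right _ _
  have hKeta : K * η ≤ lam / 2 := by
    have h1 : η ≤ lam / (2 * K) := min_le_left _ _
    have h2 : K * η ≤ K * (lam / (2 * K)) := mul_le_mul_of_nonneg_left h1 hK0.le
    have h3 : K * (lam / (2 * K)) = lam / 2 := by field_simp
    linarith
  refine ⟨η, hη0, ?_⟩
  intro δ' hδ'
  have hEw : 0 < eucNorm w := eucNorm_pos w i₀ hwi₀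
  set r : ℝ := min δ' η / (2 * (eucNorm w + 1)) with hrdef
  have hmin0 : 0 < min δ' η := lt_min hδ' hη0
  have hr0 : 0 < r := by
    apply div_pos hmin0; linarith
  have hrE : r * eucNorm w < min δ' η := by
    rw [hrdef]
    rw [div_mul_eq_mul_div, div_lt_iff₀ (by linarith)]
    nlinarith [hEw]
  set x₀ : Fin n → ℝ := fun i => r * w i with hx₀def
  obtain ⟨p, hp0, hpder⟩ := exists_global_solution (sisF β δ A) _
    (sisF_lipschitz β δ A hβ hδ hAnn) (fun x => sisF_bound β δ A hβ hδ hAnn x) x₀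
  have hcomp : ∀ t (i : Fin n), HasDerivAt (fun s => p s i) (sisF β δ A (p t) i) t :=
    fun t i => hasDerivAt_pi.mp (hpder t) i
  have hwEuc : ∀ i, w i ≤ eucNorm w := fun i => le_trans (le_abs_self _) (abs_le_eucNorm w i)
  have hx₀box : ∀ i, 0 ≤ x₀ i ∧ x₀ i ≤ η := by
    intro i
    constructor
    · exact mul_nonneg hr0.le (hw0 i)
    · have h1 : r * w i ≤ r * eucNorm w := mul_le_mul_of_nonneg_left (hwEuc i) hr0.le
      have h2 : min δ' η ≤ η := min_le_right _ _
      simp only [hx₀def]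
      linarith
  -- forward invariance of [0,1]^n
  have hinv : ∀ t, 0 ≤ t → ∀ i, 0 ≤ p t i ∧ p t i ≤ 1 := by
    intro t ht i
    constructor
    · refine barrier_ge (f := fun s => p s i) (g := fun s => sisF β δ A (p s) i)
        (fun s => hcomp s i) ?_ ?_ t ht
      · intro s _ hneg
        show 0 ≤ (1 - cl01 (p s i)) * β i * (∑ j, A i j * cl01 (p s j)) - δ i * cl01 (p s i)
        rw [cl01_of_neg hneg]
        have : 0 ≤ (1 - 0) * β i * (∑ j, A i j * cl01 (p s j)) :=
          mul_nonneg (mul_nonneg (by norm_num) (hβ i))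
            (Finset.sum_nonneg fun j _ => mul_nonneg (hAnn i j) (cl01_nonneg _))
        linarith
      · show (0:ℝ) ≤ p 0 i
        rw [congrFun hp0 i]; exact (hx₀box i).1
    · refine barrier_le (f := fun s => p s i) (g := fun s => sisF β δ A (p s) i)
        (fun s => hcomp s i) ?_ ?_ t ht
      · intro s _ hgt
        show (1 - cl01 (p s i)) * β i * (∑ j, A i j * cl01 (p s j)) - δ i * cl01 (p s i) ≤ 0
        rw [cl01_of_one_lt (show (1:ℝ) < p s i from hgt)]
        have := hδ i
        nlinarith
      · show p 0 i ≤ 1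
        rw [congrFun hp0 i]
        have := (hx₀box i).2
        linarith [hη1]
  -- main growth argument, by contradiction
  have hODE : ∀ t, 0 ≤ t → ∀ i, HasDerivAt (fun s => p s i)
      ((1 - p t i) * β i * (∑ j, A i j * p t j) - δ i * p t i) t := by
    intro t ht i
    have hbox := hinv t ht
    have hder := hcomp t i
    have hval : sisF β δ A (p t) i
        = (1 - p t i) * β i * (∑ j, A i j * p t j) - δ i * p t i := by
      unfold sisF
      have hcl : ∀ j, cl01 (p t j) = p t j :=
        fun j => cl01_eq_self (hbox j).1 (hbox j).2
      simp_rw [hcl]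
    rwa [hval] at hder
  refine ⟨p, hODE, ?_, ?_, ?_, ?_⟩
  · intro i; rw [congrFun hp0 i]; exact (hx₀box i).1
  · rw [hp0, hx₀def, eucNorm_smul r hr0.le]
    exact mul_pos hr0 hEw
  · rw [hp0, hx₀def, eucNorm_smul r hr0.le]
    exact lt_of_lt_of_le hrE (min_le_left _ _)
  by_contra hcon
  push_neg at hcon
  -- hcon : ∀ t > 0, eucNorm (p t) < η
  have hbox' : ∀ t, 0 ≤ t → ∀ i, 0 ≤ p t i ∧ p t i ≤ η := by
    intro t ht i
    refine ⟨(hinv t ht i).1, ?_⟩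
    rcases eq_or_lt_of_le ht with h | h
    · rw [← h, hp0]; exact (hx₀box i).2
    · have h1 := hcon t h
      have h2 : p t i ≤ |p t i| := le_abs_self _
      have h3 := abs_le_eucNorm (p t) i
      linarith
  set L : ℝ → ℝ := fun t => ∑ i, w i * p t i with hLdef
  have hLder : ∀ t, HasDerivAt L (∑ i, w i * sisF β δ A (p t) i) t := by
    intro t
    exact HasDerivAt.fun_sum (fun i _ => HasDerivAt.const_mul (w i) (hcomp t i))
  have hL_nonneg : ∀ t, 0 ≤ t → 0 ≤ L t := by
    intro t ht
    exact Finset.sum_nonneg fun i _ => mul_nonneg (hw0 i) (hbox' t ht i).1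
  set c : ℝ := lam / 2 with hcdef
  have hc0 : 0 < c := by simp only [hcdef]; linarith
  have hgrow : ∀ x, 0 < x → c * L x ≤ ∑ i, w i * sisF β δ A (p x) i := by
    intro x hx
    have hb := hbox' x hx.le
    have hcl : ∀ j, cl01 (p x j) = p x j :=
      fun j => cl01_eq_self (hb j).1 (le_trans (hb j).2 (by linarith))
    have hval : ∀ i, sisF β δ A (p x) i
        = (1 - p x i) * β i * (∑ j, A i j * p x j) - δ i * p x i := by
      intro i; unfold sisF; simp_rw [hcl]
    have hterm : ∀ i, w i * sisF β δ A (p x) i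
        = w i * (β i * (∑ j, A i j * p x j))
          - (w i * p x i) * (β i * (∑ j, A i j * p x j)) - δ i * (w i * p x i) := by
      intro i; rw [hval i]; ring
    rw [Finset.sum_congr rfl (fun i _ => hterm i), Finset.sum_sub_distrib,
      Finset.sum_sub_distrib]
    set T1 : ℝ := ∑ i, w i * (β i * (∑ j, A i j * p x j)) with hT1def
    set T2 : ℝ := ∑ i, (w i * p x i) * (β i * (∑ j, A i j * p x j)) with hT2def
    set T3 : ℝ := ∑ i, δ i * (w i * p x i) with hT3def
    have hT1 : T1 = ∑ j, (∑ i, β i * A i j * w i) * p x j := by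
      rw [hT1def]
      have hstep : ∀ i, w i * (β i * ∑ j, A i j * p x j)
          = ∑ j, β i * A i j * w i * p x j := by
        intro i
        rw [Finset.mul_sum, Finset.mul_sum]
        exact Finset.sum_congr rfl fun j _ => by ring
      rw [Finset.sum_congr rfl (fun i _ => hstep i), Finset.sum_comm]
      exact Finset.sum_congr rfl fun j _ => by rw [Finset.sum_mul]
    have hT1ge : ∑ j, ((lam + δ j) * w j) * p x j ≤ T1 := by
      rw [hT1]
      exact Finset.sum_le_sum fun j _ =>
        mul_le_mul_of_nonneg_right (hsup j) (hb j).1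
    have hT1split : ∑ j, ((lam + δ j) * w j) * p x j = lam * L x + T3 := by
      simp only [hLdef, hT3def]
      rw [Finset.mul_sum, ← Finset.sum_add_distrib]
      exact Finset.sum_congr rfl fun j _ => by ring
    have hT2le : T2 ≤ (K * η) * L x := by
      simp only [hT2def, hLdef]
      rw [Finset.mul_sum]
      apply Finset.sum_le_sum
      intro i _
      have hwp : 0 ≤ w i * p x i := mul_nonneg (hw0 i) (hb i).1
      have hS : ∑ j, A i j * p x j ≤ (∑ j, A i j) * η := by
        rw [Finset.sum_mul]
        exact Finset.sum_le_sum fun j _ =>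
          mul_le_mul_of_nonneg_left (hb j).2 (hAnn i j)
      have hS0 : β i * (∑ j, A i j * p x j) ≤ K * η := by
        have h1 : β i * (∑ j, A i j * p x j) ≤ β i * ((∑ j, A i j) * η) :=
          mul_le_mul_of_nonneg_left hS (hβ i)
        have h2 : β i * ((∑ j, A i j) * η) = (β i * ∑ j, A i j) * η := by ring
        have h3 : (β i * ∑ j, A i j) * η ≤ K * η :=
          mul_le_mul_of_nonneg_right (hKnn i) hη0.le
        linarith
      calc (w i * p x i) * (β i * (∑ j, A i j * p x j)) ≤ (w i * p x i) * (K * η) :=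
            mul_le_mul_of_nonneg_left hS0 hwp
        _ = K * η * (w i * p x i) := by ring
    have hL0 : 0 ≤ L x := hL_nonneg x hx.le
    have h6 : K * η ≤ lam / 2 := by rw [← hcdef]; exact hKeta
    have h4 : c * L x ≤ (lam - K * η) * L x :=
      mul_le_mul_of_nonneg_right (by rw [hcdef]; linarith [h6]) hL0
    have h5 : (lam - K * η) * L x = lam * L x - (K * η) * L x := by ring
    linarith
  set G : ℝ → ℝ := fun t => L t * Real.exp (-c * t) with hGdef
  have hGder : ∀ t, HasDerivAt G
      ((∑ i, w i * sisF β δ A (p t) i) * Real.exp (-c * t) + L t * (Real.exp (-c * t) * (-c))) t := by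
    intro t
    have hE : HasDerivAt (fun s => Real.exp (-c * s)) (Real.exp (-c * t) * (-c)) t := by
      have h1 : HasDerivAt (fun s : ℝ => -c * s) (-c) t := by
        simpa using (hasDerivAt_id t).const_mul (-c)
      exact h1.exp
    exact (hLder t).mul hE
  have hGmono : MonotoneOn G (Set.Ici (0:ℝ)) := by
    apply monotoneOn_of_deriv_nonneg (convex_Ici 0)
    · intro t _
      exact ((hGder t).continuousAt).continuousWithinAt
    · intro t _
      exact ((hGder t).differentiableAt).differentiableWithinAt
    · intro t ht
      rw [interior_Ici] at ht
      rw [(hGder t).deriv]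
      have h1 := hgrow t ht
      have h2 := Real.exp_pos (-c * t)
      have h3 := hL_nonneg t ht.le
      nlinarith
  have hL0pos : 0 < L 0 := by
    simp only [hLdef]
    rw [hp0]
    apply Finset.sum_pos' (fun i _ => mul_nonneg (hw0 i) (mul_nonneg hr0.le (hw0 i)))
    refine ⟨i₀, Finset.mem_univ i₀, ?_⟩
    have hwpos : 0 < w i₀ := lt_of_le_of_ne (hw0 i₀) (Ne.symm hwi₀)
    show 0 < w i₀ * (r * w i₀)
    positivity
  have hW : ∀ t, 0 ≤ t → L t ≤ ∑ i, w i := by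
    intro t ht
    apply Finset.sum_le_sum
    intro i _
    nlinarith [(hinv t ht i).2, hw0 i]
  set W : ℝ := ∑ i, w i with hWdef
  have hW0 : 0 ≤ W := Finset.sum_nonneg fun i _ => hw0 i
  set t₁ : ℝ := W / (c * L 0) + 1 with ht₁def
  have ht₁pos : 0 < t₁ := by
    have h : 0 ≤ W / (c * L 0) := div_nonneg hW0 (mul_pos hc0 hL0pos).le
    rw [ht₁def]
    linarith
  have hmono := hGmono (Set.self_mem_Ici) (Set.mem_Ici.mpr ht₁pos.le) ht₁pos.le
  have hG0 : G 0 = L 0 := by simp [hGdef]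
  have hGt₁ : G t₁ = L t₁ * Real.exp (-c * t₁) := rfl
  -- L t₁ ≥ L 0 * exp (c * t₁)
  have hgrow2 : L 0 * Real.exp (c * t₁) ≤ L t₁ := by
    rw [hG0, hGt₁] at hmono
    have heq : Real.exp (-c * t₁) * Real.exp (c * t₁) = 1 := by
      have h0 : -c * t₁ + c * t₁ = 0 := by ring
      rw [← Real.exp_add, h0, Real.exp_zero]
    have h' := mul_le_mul_of_nonneg_right hmono (Real.exp_pos (c * t₁)).le
    have h'' : L t₁ * Real.exp (-c * t₁) * Real.exp (c * t₁) = L t₁ := by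
      rw [mul_assoc, heq, mul_one]
    linarith [h', h'']
  have hexp : 1 + c * t₁ ≤ Real.exp (c * t₁) := by
    have := Real.add_one_le_exp (c * t₁)
    linarith
  have hcontr : W < L 0 * Real.exp (c * t₁) := by
    have h1 : L 0 * (1 + c * t₁) ≤ L 0 * Real.exp (c * t₁) :=
      mul_le_mul_of_nonneg_left hexp hL0pos.le
    have hne : c * L 0 ≠ 0 := (mul_pos hc0 hL0pos).ne'
    have h2 : c * L 0 * t₁ = W + c * L 0 := by
      rw [ht₁def]
      field_simp
    have h3 : L 0 * (1 + c * t₁) = L 0 + c * L 0 * t₁ := by ring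
    linarith [mul_pos hc0 hL0pos, h3, h2, h1]
  have := hW t₁ ht₁pos.le
  linarith
end
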